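/- arXiv:1902.06401 — 5 statements merged into one kernel-verified Lean document; each statement's English description precedes it below -/
import Mathlib

section
/- Let C ⊆ ℝ^n be a proper convex cone, let m be a positive integer, and let K_1, …, K_m ⊆ ℝ^{d_1}, …, ℝ^{d_m} be closed convex cones with ℓ(K_i) ≤ k+1 for each i = 1, …, m. Suppose that for every N ∈ ℕ there exists a finite subset V_N ⊆ ext(C) with |V_N| ≥ N such that C is k-neighborly with respect to V_N. Then C does not have a (K_1 × ⋯ × K_m)-lift. -/
open scoped RealInnerProductSpace

/-- A closed convex cone (containing the origin). -/
def IsClosedConvexCone {E : Type*} [AddCommGroup E] [Module ℝ E] [TopologicalSpace E]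
    (K : Set E) : Prop :=
  IsClosed K ∧ Convex ℝ K ∧ (0 : E) ∈ K ∧ ∀ x ∈ K, ∀ t : ℝ, 0 ≤ t → t • x ∈ K

/-- A proper convex cone: closed, pointed, and full-dimensional. -/
def IsProperCone {E : Type*} [AddCommGroup E] [Module ℝ E] [TopologicalSpace E]
    (C : Set E) : Prop :=
  IsClosedConvexCone C ∧ C ∩ (-C) = {0} ∧ Submodule.span ℝ C = ⊤

/-- A face of a convex cone. -/
def IsFace {E : Type*} [AddCommGroup E] [Module ℝ E] (K F : Set E) : Prop :=
  F ⊆ K ∧ Convex ℝ F ∧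
    ∀ ⦃x⦄, x ∈ K → ∀ ⦃y⦄, y ∈ K → ∀ ⦃α : ℝ⦄, 0 < α → α < 1 →
      α • x + (1 - α) • y ∈ F → x ∈ F ∧ y ∈ F

/-- `FaceChainBound K m` says that every chain of nonempty faces of `K` has length at most `m`,
i.e. `ℓ(K) ≤ m`. -/
def FaceChainBound {E : Type*} [AddCommGroup E] [Module ℝ E] (K : Set E) (m : ℕ) : Prop :=
  ∀ (l : ℕ) (F : Fin l → Set E),
    (∀ i, IsFace K (F i) ∧ (F i).Nonempty) →
    (∀ i j : Fin l, i < j → F i ⊂ F j) → l ≤ m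

/-- The ray generated by `v`. -/
def rayOf {E : Type*} [AddCommGroup E] [Module ℝ E] (v : E) : Set E :=
  {x | ∃ t : ℝ, 0 ≤ t ∧ x = t • v}

/-- `v` generates an extreme ray of `K`. -/
def IsExtremeRay {E : Type*} [AddCommGroup E] [Module ℝ E] (K : Set E) (v : E) : Prop :=
  v ∈ K ∧ v ≠ 0 ∧ IsFace K (rayOf v)

/-- The dual cone. -/
def dualCone {E : Type*} [NormedAddCommGroup E] [InnerProductSpace ℝ E] (C : Set E) : Set E :=
  {f | ∀ x ∈ C, 0 ≤ ⟪f, x⟫}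

/-- Normalized extreme rays. -/
def extSet {E : Type*} [NormedAddCommGroup E] [InnerProductSpace ℝ E] (C : Set E) : Set E :=
  {v | ‖v‖ = 1 ∧ IsExtremeRay C v}

/-- `C` is `k`-neighborly with respect to `V ⊆ ext C`. -/
def IsNeighborly {E : Type*} [NormedAddCommGroup E] [InnerProductSpace ℝ E]
    (C : Set E) (k : ℕ) (V : Set E) : Prop :=
  V ⊆ extSet C ∧
    ∀ W ⊆ V, W.Finite → W.ncard = k →
      ∃ f ∈ dualCone C, (∀ v ∈ W, ⟪f, v⟫ = 0) ∧ ∀ v ∈ V \ W, 0 < ⟪f, v⟫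

/-!
Lift every point `v` of a large neighborly set `V` to `x v ∈ (K₁ × ⋯ × Kₘ) ∩ L`. A functional
`f ∈ C*` vanishing on a `k`-set `B ⊆ V` and positive at `v ∉ B` shows that `x v` is not in the
minimal face of the product cone generated by `∑ b ∈ B, x b`, hence some coordinate `i`
separates them. Colouring each `(k+1)`-subset of `V` by the coordinate that separates its least
element from the rest, Ramsey's theorem gives `2k+1` points `u₀ < ⋯ < u₂ₖ` of a common colour
`i`, and the faces of `Kᵢ` generated by `x uₖ`, `x uₖ₋₁ + x uₖ`, …, `x u₀ + ⋯ + x uₖ` then form a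
strict chain of length `k + 2`, contradicting `ℓ(Kᵢ) ≤ k + 1`.
-/

open Finset

universe u

section Ramsey

def IsRamseyBound (κ : Type*) (r M N : ℕ) : Prop :=
  ∀ (α : Type u) [LinearOrder α] (c : Finset α → κ) (S : Finset α), N ≤ #S →
    ∃ U ⊆ S, #U = M ∧ ∃ i, ∀ A ⊆ U, #A = r → c A = i

variable {κ : Type*}

theorem exists_endHomogeneous {r : ℕ} (ih : ∀ M, ∃ N, IsRamseyBound.{u} κ r M N) (s : ℕ) :
    ∃ N, ∀ (α : Type u) [LinearOrder α] (c : Finset α → κ) (S : Finset α), N ≤ #S →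
      ∃ U ⊆ S, #U = s ∧ ∃ f : α → κ, ∀ a ∈ U, ∀ A ⊆ U, #A = r → (∀ b ∈ A, a < b) →
        c (insert a A) = f a := by
  induction s with
  | zero => exact ⟨0, fun α _ c S _ => ⟨∅, empty_subset S, rfl, fun _ => c ∅, by simp⟩⟩
  | succ s ihs =>
    obtain ⟨Ns, hNs⟩ := ihs
    obtain ⟨N, hN⟩ := ih Ns
    refine ⟨N + 1, fun α _ c S hS => ?_⟩
    have hne : S.Nonempty := card_pos.1 (by omega)
    set a := S.min' hne
    have haS : a ∈ S := S.min'_mem hne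
    obtain ⟨U', hU'S, hU', i₀, hi₀⟩ := hN α (fun A => c (insert a A)) (S.erase a)
      (by rw [card_erase_of_mem haS]; omega)
    obtain ⟨U, hUU', hU, f, hf⟩ := hNs α c U' hU'.ge
    have hUS : U ⊆ S.erase a := hUU'.trans hU'S
    have haU : a ∉ U := fun h => S.notMem_erase a (hUS h)
    refine ⟨insert a U, insert_subset haS (hUS.trans (S.erase_subset a)),
      by rw [card_insert_of_notMem haU, hU], Function.update f a i₀, ?_⟩
    intro b hb A hAU hA hbA
    rcases mem_insert.1 hb with rfl | hb
    · rw [Function.update_self]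
      exact hi₀ A ((subset_insert_iff_of_notMem fun h => (hbA _ h).false).1 hAU |>.trans hUU') hA
    · have hab : a < b := S.min'_lt_of_mem_erase_min' hne (hUS hb)
      rw [Function.update_of_ne hab.ne']
      exact hf b hb A ((subset_insert_iff_of_notMem fun h => (hab.trans (hbA _ h)).false).1 hAU)
        hA hbA

theorem exists_isRamseyBound [Fintype κ] (r M : ℕ) : ∃ N, IsRamseyBound.{u} κ r M N := by
  induction r generalizing M with
  | zero =>
    refine ⟨M, fun α _ c S hS => ?_⟩
    obtain ⟨U, hUS, hU⟩ := exists_subset_card_eq hS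
    exact ⟨U, hUS, hU, c ∅, fun A _ hA => by rw [card_eq_zero.1 hA]⟩
  | succ r ih =>
    classical
    obtain ⟨N, hN⟩ := exists_endHomogeneous ih (Fintype.card κ * M + 1)
    refine ⟨N, fun α _ c S hS => ?_⟩
    obtain ⟨U, hUS, hU, f, hf⟩ := hN α c S hS
    -- `f a` is the colour of every set with least element `a`: pigeonhole on it
    obtain ⟨i, -, hi⟩ := exists_lt_card_fiber_of_mul_lt_card_of_maps_to (s := U) (t := univ)
      (f := f) (n := M) (fun _ _ => mem_univ _) (by simp [hU])
    obtain ⟨W, hW, hWM⟩ := exists_subset_card_eq hi.le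
    have hWU : W ⊆ U := hW.trans (filter_subset _ _)
    refine ⟨W, hWU.trans hUS, hWM, i, fun A hAW hA => ?_⟩
    have hne : A.Nonempty := card_pos.1 (by omega)
    have hmin := A.min'_mem hne
    rw [← insert_erase hmin, hf _ (hWU (hAW hmin)) _ ((erase_subset _ _).trans (hAW.trans hWU))
      (by rw [card_erase_of_mem hmin, hA]; rfl) fun b hb => A.min'_lt_of_mem_erase_min' hne hb]
    exact (mem_filter.1 (hW (hAW hmin))).2

end Ramsey

section MinFace

variable {E : Type*} [AddCommGroup E] [Module ℝ E]

/-- The smallest face of `K` containing `y ∈ K`. -/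
def minFace (K : PointedCone ℝ E) (y : E) : Set E :=
  {x | x ∈ K ∧ ∃ ε : ℝ, 0 < ε ∧ y - ε • x ∈ K}

variable {K : PointedCone ℝ E} {x y z : E}

theorem sub_smul_mem_of_le (hx : x ∈ K) {ε ε' : ℝ} (h : y - ε • x ∈ K) (hε' : ε' ≤ ε) :
    y - ε' • x ∈ K := by
  have : y - ε' • x = (y - ε • x) + (ε - ε') • x := by module
  rw [this]
  exact K.add_mem h (K.smul_mem (sub_nonneg.2 hε') hx)

theorem zero_mem_minFace (hy : y ∈ K) : 0 ∈ minFace K y :=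
  ⟨K.zero_mem, 1, one_pos, by simpa using hy⟩

theorem isFace_minFace : IsFace (K : Set E) (minFace K y) := by
  refine ⟨fun x hx => hx.1, ?_, ?_⟩
  · rintro x₁ ⟨hx₁, ε₁, hε₁, h₁⟩ x₂ ⟨hx₂, ε₂, hε₂, h₂⟩ a b ha hb hab
    refine ⟨K.convex hx₁ hx₂ ha hb hab, min ε₁ ε₂, lt_min hε₁ hε₂, ?_⟩
    obtain rfl : b = 1 - a := by linarith
    have : y - min ε₁ ε₂ • (a • x₁ + (1 - a) • x₂) =
        a • (y - min ε₁ ε₂ • x₁) + (1 - a) • (y - min ε₁ ε₂ • x₂) := by module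
    rw [this]
    exact K.add_mem (K.smul_mem ha (sub_smul_mem_of_le hx₁ h₁ (min_le_left _ _)))
      (K.smul_mem hb (sub_smul_mem_of_le hx₂ h₂ (min_le_right _ _)))
  · rintro x₁ hx₁ x₂ hx₂ α hα hα1 ⟨-, ε, hε, h⟩
    have h₁ : y - (ε * α) • x₁ = (y - ε • (α • x₁ + (1 - α) • x₂)) + (ε * (1 - α)) • x₂ := by
      module
    have h₂ : y - (ε * (1 - α)) • x₂ = (y - ε • (α • x₁ + (1 - α) • x₂)) + (ε * α) • x₁ := by
      module
    refine ⟨⟨hx₁, ε * α, by positivity, ?_⟩, ⟨hx₂, ε * (1 - α), mul_pos hε (by linarith), ?_⟩⟩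
    · rw [h₁]
      exact K.add_mem h (K.smul_mem (mul_nonneg hε.le (by linarith)) hx₂)
    · rw [h₂]
      exact K.add_mem h (K.smul_mem (by positivity) hx₁)

theorem minFace_subset_minFace_add (hz : z ∈ K) : minFace K y ⊆ minFace K (y + z) := by
  rintro x ⟨hx, ε, hε, h⟩
  refine ⟨hx, ε, hε, ?_⟩
  rw [add_sub_right_comm]
  exact K.add_mem h hz

variable {ι : Type*} {f : ι → E}

theorem minFace_sum_subset_minFace_sum {s t : Finset ι} (hst : s ⊆ t) (hf : ∀ i ∈ t, f i ∈ K) :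
    minFace K (∑ i ∈ s, f i) ⊆ minFace K (∑ i ∈ t, f i) := by
  classical
  rw [← Finset.sum_sdiff hst, add_comm]
  exact minFace_subset_minFace_add (sum_mem fun i hi => hf i (Finset.sdiff_subset hi))

theorem mem_minFace_sum {s : Finset ι} (hf : ∀ i ∈ s, f i ∈ K) {j : ι} (hj : j ∈ s) :
    f j ∈ minFace K (∑ i ∈ s, f i) := by
  classical
  refine ⟨hf j hj, 1, one_pos, ?_⟩
  rw [one_smul, ← Finset.sum_erase_eq_sub hj]
  exact sum_mem fun i hi => hf i (Finset.mem_of_mem_erase hi)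

end MinFace

section Chain

variable {E : Type*} [AddCommGroup E] [Module ℝ E] {K : PointedCone ℝ E} {k : ℕ}

/-- The faces generated by the partial sums `y k, y (k-1) + y k, …` form a strict chain of
length `k + 2`. -/
theorem not_faceChainBound_of_notMem_minFace {y : ℕ → E} (hy : ∀ t, y t ∈ K)
    (hsep : ∀ p ≤ k, y p ∉ minFace K (∑ t ∈ Ioc p (p + k), y t)) :
    ¬ FaceChainBound (K : Set E) (k + 1) := by
  intro hK
  let F : Fin (k + 2) → Set E := fun j => minFace K (∑ t ∈ Ico (k + 1 - j) (k + 1), y t)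
  have hF : ∀ i j : Fin (k + 2), i < j → F i ⊂ F j := by
    intro i j hij
    rw [Fin.lt_def] at hij
    have hi := j.isLt
    refine ⟨minFace_sum_subset_minFace_sum (Ico_subset_Ico (by omega) le_rfl)
      fun t _ => hy t, fun hji => hsep (k - i) (by omega) ?_⟩
    refine minFace_sum_subset_minFace_sum (fun t ht => ?_) (fun t _ => hy t)
      (hji (mem_minFace_sum (fun t _ => hy t) ?_))
    · simp only [mem_Ico, mem_Ioc] at ht ⊢
      omega
    · simp only [mem_Ico]
      omega
  have := hK (k + 2) F (fun j => ⟨isFace_minFace, _, zero_mem_minFace (sum_mem fun t _ => hy t)⟩)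
    hF
  omega

theorem not_faceChainBound_of_forall_notMem_minFace {α : Type*} [LinearOrder α] {x : α → E}
    {U : Finset α} (hU : #U = 2 * k + 1) (hx : ∀ a ∈ U, x a ∈ K)
    (hsep : ∀ a ∈ U, ∀ B ⊆ U, #B = k → (∀ b ∈ B, a < b) → x a ∉ minFace K (∑ b ∈ B, x b)) :
    ¬ FaceChainBound (K : Set E) (k + 1) := by
  -- enumerate `U` increasingly; clamping keeps every index inside `U`
  let w : ℕ → α := fun t => U.orderEmbOfFin hU (Fin.clamp t (2 * k))
  have hwU : ∀ t, w t ∈ U := fun t => U.orderEmbOfFin_mem hU _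
  have hw : StrictMonoOn w (Set.Iic (2 * k)) := by
    intro s hs t ht hst
    refine (U.orderEmbOfFin hU).strictMono ?_
    simp only [Set.mem_Iic] at hs ht
    simp only [Fin.lt_def, Fin.coe_clamp]
    omega
  refine not_faceChainBound_of_notMem_minFace (y := x ∘ w) (fun t => hx _ (hwU t)) fun p hp => ?_
  have hwin : ∀ t ∈ Ioc p (p + k), t ∈ Set.Iic (2 * k) := by
    intro t ht
    simp only [mem_Ioc, Set.mem_Iic] at ht ⊢
    omega
  have hinj : Set.InjOn w (Ioc p (p + k)) := hw.injOn.mono hwin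
  have := hsep (w p) (hwU p) ((Ioc p (p + k)).image w) (image_subset_iff.2 fun t _ => hwU t)
    (by rw [card_image_of_injOn hinj, Nat.card_Ioc]; omega) ?_
  · rwa [sum_image hinj] at this
  · simp only [mem_image]
    rintro _ ⟨t, ht, rfl⟩
    exact hw (by simp only [Set.mem_Iic]; omega) (hwin t ht) (mem_Ioc.1 ht).1

end Chain

section Product

variable {ι : Type*} {E : ι → Type*} [∀ i, AddCommGroup (E i)] [∀ i, Module ℝ (E i)]
  {K : ∀ i, PointedCone ℝ (E i)}

theorem mem_minFace_pi [Finite ι] {x y : ∀ i, E i} :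
    x ∈ minFace (Submodule.pi Set.univ K) y ↔ ∀ i, x i ∈ minFace (K i) (y i) := by
  simp only [minFace, Set.mem_ofPred_eq, Submodule.mem_pi, Set.mem_univ, true_implies]
  refine ⟨fun ⟨hx, ε, hε, h⟩ i => ⟨hx i, ε, hε, h i⟩, fun h => ⟨fun i => (h i).1, ?_⟩⟩
  -- each coordinate admits every sufficiently small `ε > 0`, so finitely many admit a common one
  have hev : ∀ i, ∀ᶠ ε in nhdsWithin (0 : ℝ) (Set.Ioi 0), y i - ε • x i ∈ K i := fun i => by
    obtain ⟨hx, ε, hε, hε'⟩ := h i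
    filter_upwards [Ioc_mem_nhdsGT hε] with ε' hε'' using sub_smul_mem_of_le hx hε' hε''.2
  obtain ⟨ε, hε, hεK⟩ := ((Filter.eventually_all.2 hev).and self_mem_nhdsWithin).exists
  exact ⟨ε, hεK, hε⟩

theorem exists_mem_minFace_sum_of_faceChainBound [Fintype ι] [Nonempty ι] {k : ℕ}
    (hK : ∀ i, FaceChainBound (K i : Set (E i)) (k + 1)) :
    ∃ N, ∀ x : Fin N → ∀ i, E i, (∀ a i, x a i ∈ K i) →
      ∃ a B, #B = k ∧ a ∉ B ∧ ∀ i, x a i ∈ minFace (K i) (∑ b ∈ B, x b i) := by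
  classical
  obtain ⟨N, hN⟩ := exists_isRamseyBound.{0} (κ := ι) (k + 1) (2 * k + 1)
  refine ⟨N, fun x hx => ?_⟩
  by_contra! hsep
  choose! col hcol using hsep
  -- colour a set by the coordinate separating its least element from the others
  let c : Finset (Fin N) → ι := fun A =>
    if h : A.Nonempty then col (A.min' h) (A.erase (A.min' h)) else Classical.arbitrary ι
  obtain ⟨U, -, hU, i, hi⟩ := hN (Fin N) c univ (by simp)
  refine not_faceChainBound_of_forall_notMem_minFace (x := fun a => x a i) hU
    (fun a _ => hx a i) (fun a ha B hBU hB haB => ?_) (hK i)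
  have haB' : a ∉ B := fun h => lt_irrefl a (haB a h)
  have hmin : (insert a B).min' (insert_nonempty a B) = a :=
    le_antisymm (min'_le _ _ (mem_insert_self a B))
      (le_min' _ _ _ fun b hb => (mem_insert.1 hb).elim ge_of_eq fun hb => (haB b hb).le)
  have hc : c (insert a B) = col a B := by
    simp only [c, dif_pos (insert_nonempty a B), hmin, erase_insert haB']
  rw [← hi (insert a B) (insert_subset ha hBU) (by rw [card_insert_of_notMem haB', hB]), hc]
  exact hcol a B hB haB'

end Product

theorem Set.Finite.exists_embedding_fin {F : Type*} {V : Set F} (hV : V.Finite) {N : ℕ}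
    (hN : N ≤ V.ncard) : ∃ e : Fin N ↪ F, ∀ a, e a ∈ V := by
  have := hV.fintype
  obtain ⟨e⟩ : Nonempty (Fin N ↪ V) := Function.Embedding.nonempty_of_card_le (by
    rwa [Fintype.card_fin, ← Nat.card_eq_fintype_card, Nat.card_coe_set_eq])
  exact ⟨e.trans (Function.Embedding.subtype _), fun a => (e a).2⟩

def IsClosedConvexCone.toPointedCone {E : Type*} [AddCommGroup E] [Module ℝ E]
    [TopologicalSpace E] {K : Set E} (hK : IsClosedConvexCone K) : PointedCone ℝ E where
  carrier := K
  add_mem' {a b} ha hb := by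
    have := hK.2.2.2 _ (hK.2.1 ha hb (by norm_num : (0 : ℝ) ≤ 1 / 2)
      (by norm_num : (0 : ℝ) ≤ 1 / 2) (by norm_num)) 2 zero_le_two
    rwa [smul_add, smul_smul, smul_smul, show (2 : ℝ) * (1 / 2) = 1 by norm_num, one_smul,
      one_smul] at this
  zero_mem' := hK.2.2.1
  smul_mem' c x hx := hK.2.2.2 x hx c c.2

theorem notMem_minFace_sum_of_isNeighborly {E F : Type*} [AddCommGroup E] [Module ℝ E]
    [NormedAddCommGroup F] [InnerProductSpace ℝ F] {P : PointedCone ℝ E} {L : Submodule ℝ E}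
    {π : E →ₗ[ℝ] F} {C : Set F} (hlift : π '' (P ∩ L) ⊆ C) {k : ℕ} {V : Set F}
    (hV : IsNeighborly C k V) {x : F → E} (hxL : ∀ v ∈ V, x v ∈ L)
    (hπx : ∀ v ∈ V, π (x v) = v) {B : Finset F} (hBV : ↑B ⊆ V) (hB : #B = k) {v : F}
    (hv : v ∈ V) (hvB : v ∉ B) :
    x v ∉ minFace P (∑ b ∈ B, x b) := by
  rintro ⟨-, ε, hε, hmem⟩
  obtain ⟨f, hf, hfB, hfv⟩ := hV.2 B hBV B.finite_toSet (by rw [Set.ncard_coe_finset, hB])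
  have hC : π (∑ b ∈ B, x b - ε • x v) ∈ C :=
    hlift ⟨_, ⟨hmem, L.sub_mem (sum_mem fun b hb => hxL b (hBV hb)) (L.smul_mem ε (hxL v hv))⟩,
      rfl⟩
  have hπ : π (∑ b ∈ B, x b - ε • x v) = ∑ b ∈ B, b - ε • v := by
    rw [map_sub, map_sum, map_smul, hπx v hv, sum_congr rfl fun b hb => hπx b (hBV hb)]
  -- `f` vanishes on `B` and is positive at `v`, so it is negative at `∑ B - ε v ∈ C`
  have := hf _ hC
  rw [hπ, inner_sub_right, inner_sum, sum_eq_zero fun b hb => hfB b hb, real_inner_smul_right]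
    at this
  nlinarith [hfv v ⟨hv, hvB⟩]

theorem statement_0_general {n k m : ℕ} (hm : 0 < m) (d : Fin m → ℕ)
    (C : Set (EuclideanSpace ℝ (Fin n)))
    (K : ∀ i : Fin m, Set (EuclideanSpace ℝ (Fin (d i))))
    (hK : ∀ i, IsClosedConvexCone (K i))
    (hKl : ∀ i, FaceChainBound (K i) (k + 1))
    (hnb : ∀ N : ℕ, ∃ V : Set (EuclideanSpace ℝ (Fin n)),
      V.Finite ∧ N ≤ V.ncard ∧ IsNeighborly C k V) :
    ¬ ∃ (π : (∀ i, EuclideanSpace ℝ (Fin (d i))) →ₗ[ℝ] EuclideanSpace ℝ (Fin n))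
        (L : Submodule ℝ (∀ i, EuclideanSpace ℝ (Fin (d i)))),
        C = π '' ({x | ∀ i, x i ∈ K i} ∩ (L : Set (∀ i, EuclideanSpace ℝ (Fin (d i))))) := by
  rintro ⟨π, L, hlift⟩
  have : Nonempty (Fin m) := ⟨⟨0, hm⟩⟩
  let Kc i := (hK i).toPointedCone
  let P := Submodule.pi Set.univ Kc
  obtain ⟨N, hN⟩ := exists_mem_minFace_sum_of_faceChainBound (K := Kc) hKl
  obtain ⟨V, hVfin, hVN, hV⟩ := hnb N
  have hlifts : ∀ v ∈ V, ∃ x ∈ P, x ∈ L ∧ π x = v := by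
    intro v hv
    obtain ⟨x, ⟨hxK, hxL⟩, rfl⟩ := hlift ▸ (hV.1 hv).2.1
    exact ⟨x, fun i _ => hxK i, hxL, rfl⟩
  choose! xl hxP hxL hπx using hlifts
  obtain ⟨e, he⟩ := hVfin.exists_embedding_fin hVN
  obtain ⟨a, B, hB, haB, hmem⟩ :=
    hN (fun a => xl (e a)) fun a i => hxP _ (he a) i (Set.mem_univ i)
  refine notMem_minFace_sum_of_isNeighborly (P := P) ?_ hV hxL hπx (B := B.map e)
    (by simpa [Set.subset_def] using fun b _ => he b) (by rw [card_map, hB]) (he a)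
    (fun h => haB ((mem_map' e).1 h)) ?_
  · rw [hlift]
    exact Set.image_mono (Set.inter_subset_inter_left _ fun x hx i => hx i (Set.mem_univ i))
  · rw [sum_map]
    exact mem_minFace_pi.2 fun i => by rw [Finset.sum_apply]; exact hmem i

/-- If `C ⊆ ℝⁿ` is a proper convex cone that is `k`-neighborly with respect to
arbitrarily large finite subsets of its normalized extreme rays, and `K₁, …, Kₘ` are closed
convex cones each with `ℓ(Kᵢ) ≤ k + 1`, then `C` has no `K₁ × ⋯ × Kₘ`-lift. -/
theorem statement_0 {n k m : ℕ} (hm : 0 < m) (d : Fin m → ℕ)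
    (C : Set (EuclideanSpace ℝ (Fin n))) (hC : IsProperCone C)
    (K : ∀ i : Fin m, Set (EuclideanSpace ℝ (Fin (d i))))
    (hK : ∀ i, IsClosedConvexCone (K i))
    (hKl : ∀ i, FaceChainBound (K i) (k + 1))
    (hnb : ∀ N : ℕ, ∃ V : Set (EuclideanSpace ℝ (Fin n)),
      V.Finite ∧ N ≤ V.ncard ∧ IsNeighborly C k V) :
    ¬ ∃ (π : (∀ i, EuclideanSpace ℝ (Fin (d i))) →ₗ[ℝ] EuclideanSpace ℝ (Fin n))
        (L : Submodule ℝ (∀ i, EuclideanSpace ℝ (Fin (d i)))),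
        C = π '' ({x | ∀ i, x i ∈ K i} ∩ (L : Set (∀ i, EuclideanSpace ℝ (Fin (d i))))) :=
  statement_0_general hm d C K hK hKl hnb
end

section
/- For all positive integers k and m there exists a positive integer N (one may take the k-uniform hypergraph Ramsey number R_k(k+1; (k+1)^m)) with the following property: let S be a finite set with |S| ≥ k, and suppose for each i ∈ [m] there are maps a_i : binom(S,k) → S₊^k and b_i : S → S₊^k (into the cone of k×k real symmetric positive semidefinite matrices) such that for every k-element subset T ⊆ S and every s ∈ S, Σ_{i=1}^m ⟨a_i(T), b_i(s)⟩ = 0 if and only if s ∈ T (where ⟨A,B⟩ = tr(AB)). Then |S| < N. -/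
/-!
Colour each `k`-subset `T ⊆ S` by the dimensions `dim (∑_{t ∈ T} range bᵢ(t)) ∈ {0, …, k}`,
`i ∈ [m]`. Beyond the hypergraph Ramsey number there is a `(k+1)`-set `Z ⊆ S` all of whose
`k`-subsets have the same colour. For `z ∈ Z` and `T = Z \ {z}` the sum `Σᵢ tr(aᵢ(T) bᵢ(z))` does
not vanish, while positive semidefiniteness turns the vanishing sums at `t ∈ T` into
`aᵢ(T) bᵢ(t) = 0`; hence some `range bᵢ(z)` is not contained in `∑_{t ∈ T} range bᵢ(t)`. Since all
these sums have the same dimension, one index `i` then works for every `z ∈ Z`, so the `k + 1`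
subspaces `range bᵢ(z)` are irredundant and span a space of dimension `≥ k + 1` inside `ℝᵏ`.
-/

open Finset Module

universe u

section Ramsey

variable {β : Type*}

section EndHomogeneous

variable {γ : Type u} [LinearOrder γ]

def EndHomogeneous (k : ℕ) (χ : Finset γ → β) (A P : Finset γ) : Prop :=
  ∀ Q ⊆ A, Q.card = k → ∀ y ∈ A ∪ P, ∀ z ∈ A ∪ P, (∀ q ∈ Q, q < y) → (∀ q ∈ Q, q < z) →
    χ (insert y Q) = χ (insert z Q)

lemma endHomogeneous_empty_filter [DecidableEq β] (k : ℕ) (χ : Finset γ → β) (P : Finset γ)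
    (c : β) : EndHomogeneous k χ ∅ (P.filter fun x => χ {x} = c) := by
  intro Q hQ _ y hy z hz _ _
  obtain rfl := subset_empty.mp hQ
  simp only [empty_union, mem_filter] at hy hz
  exact hy.2.trans hz.2.symm

lemma EndHomogeneous.exists_insert_min' [Fintype β] {k : ℕ} {χ : Finset γ → β} {A P : Finset γ}
    (h : EndHomogeneous k χ A P) (hAP : ∀ x ∈ A, ∀ p ∈ P, x < p) (hP : P.Nonempty) {L : ℕ}
    (hL : Fintype.card β ^ ((A.card + 1).choose k) * L < P.card) :
    ∃ P' ⊆ P, L ≤ P'.card ∧ (∀ p ∈ P', P.min' hP < p) ∧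
      EndHomogeneous k χ (insert (P.min' hP) A) P' := by
  classical
  have : Nonempty β := ⟨χ ∅⟩
  set a := P.min' hP
  have haP : a ∈ P := P.min'_mem hP
  have haA : a ∉ A := fun ha => (hAP a ha a haP).false
  -- pigeonhole on the colours of all `k`-subsets of `insert a A` topped by a point of `P`
  let f : γ → (insert a A).powersetCard k → β := fun x Q => χ (insert x Q.1)
  have hcard : Fintype.card ((insert a A).powersetCard k → β) * L ≤ (P.erase a).card := by
    rw [Fintype.card_fun, Fintype.card_coe, card_powersetCard, card_insert_of_notMem haA,
      card_erase_of_mem haP]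
    omega
  obtain ⟨c, -, hc⟩ := exists_le_card_fiber_of_mul_le_card_of_maps_to
    (fun x _ => mem_univ (f x)) univ_nonempty (by simpa using hcard)
  set P' := (P.erase a).filter fun x => f x = c
  have hP'P : P' ⊆ P := (filter_subset _ _).trans (erase_subset _ _)
  have ha_lt : ∀ p ∈ P', a < p := fun p hp =>
    have hp' := (mem_filter.mp hp).1
    (P.min'_le p (mem_of_mem_erase hp')).lt_of_ne (ne_of_mem_erase hp').symm
  refine ⟨P', hP'P, hc, ha_lt, fun Q hQ hQc y hy z hz hQy hQz => ?_⟩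
  by_cases haQ : a ∈ Q
  · have hmem : ∀ w ∈ insert a A ∪ P', a < w → w ∈ P' := by
      intro w hw haw
      rcases mem_union.mp hw with hw | hw
      · rcases mem_insert.mp hw with rfl | hw
        · exact absurd haw (lt_irrefl _)
        · exact absurd (hAP w hw a haP) haw.asymm
      · exact hw
    have hQ' : Q ∈ (insert a A).powersetCard k := mem_powersetCard.mpr ⟨hQ, hQc⟩
    have hy' := congrFun (mem_filter.mp (hmem y hy (hQy a haQ))).2 ⟨Q, hQ'⟩
    have hz' := congrFun (mem_filter.mp (hmem z hz (hQz a haQ))).2 ⟨Q, hQ'⟩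
    exact hy'.trans hz'.symm
  · have hQA : Q ⊆ A := fun q hq =>
      (mem_insert.mp (hQ hq)).resolve_left (ne_of_mem_of_not_mem hq haQ)
    have hsub : insert a A ∪ P' ⊆ A ∪ P :=
      union_subset (insert_subset (mem_union_right _ haP) subset_union_left)
        (hP'P.trans subset_union_right)
    exact h Q hQA hQc y (hsub hy) z (hsub hz) hQy hQz

lemma EndHomogeneous.monochromatic_insert {k : ℕ} {χ : Finset γ → β} {A P : Finset γ}
    (h : EndHomogeneous k χ A P) (hAP : ∀ x ∈ A, ∀ p ∈ P, x < p) {x : γ} (hx : x ∈ P)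
    {Z : Finset γ} (hZA : Z ⊆ A) (hZ : Z.card = k + 1) {c : β}
    (hc : ∀ Q ⊆ Z, Q.card = k → χ (insert x Q) = c) :
    ∀ T ⊆ insert x Z, T.card = k + 1 → χ T = c := by
  intro T hT hTc
  by_cases hxT : x ∈ T
  · rw [← insert_erase hxT]
    refine hc _ (fun q hq => ?_) (by rw [card_erase_of_mem hxT, hTc]; rfl)
    exact (mem_insert.mp (hT (mem_of_mem_erase hq))).resolve_left (ne_of_mem_erase hq)
  -- `T = Z`: swap its top element `q` for `x`, which end-homogeneity allows
  have hTZ : T = Z := eq_of_subset_of_card_le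
    (fun t ht => (mem_insert.mp (hT ht)).resolve_left (ne_of_mem_of_not_mem ht hxT)) (by omega)
  subst hTZ
  have hT : T.Nonempty := card_pos.mp (by omega)
  have hq := T.max'_mem hT
  have hQT : T.erase (T.max' hT) ⊆ T := erase_subset _ _
  have hQc : (T.erase (T.max' hT)).card = k := by rw [card_erase_of_mem hq, hZ]; rfl
  rw [← hc _ hQT hQc, ← h _ (hQT.trans hZA) hQc _ (mem_union_left _ (hZA hq)) x
    (mem_union_right _ hx) (fun q hq' => T.lt_max'_of_mem_erase_max' hT hq')
    (fun q hq' => hAP q (hZA (hQT hq')) x hx), insert_erase hq]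

end EndHomogeneous

theorem exists_endHomogeneous_s3 [Fintype β] (k t L : ℕ) :
    ∃ M : ℕ, ∀ (γ : Type u) [LinearOrder γ] (χ : Finset γ → β) (S : Finset γ), M ≤ S.card →
      ∃ A ⊆ S, ∃ P ⊆ S, (∀ x ∈ A, ∀ p ∈ P, x < p) ∧ A.card = t ∧ L ≤ P.card ∧
        EndHomogeneous k χ A P := by
  classical
  induction t generalizing L with
  | zero =>
    refine ⟨Fintype.card β * L, fun γ _ χ S hS => ?_⟩
    have : Nonempty β := ⟨χ ∅⟩
    obtain ⟨c, -, hc⟩ := exists_le_card_fiber_of_mul_le_card_of_maps_to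
      (fun x _ => mem_univ (χ {x})) univ_nonempty (by simpa using hS)
    exact ⟨∅, empty_subset _, _, filter_subset _ S, by simp, rfl, hc,
      endHomogeneous_empty_filter k χ S c⟩
  | succ t ih =>
    obtain ⟨M, hM⟩ := ih (Fintype.card β ^ ((t + 1).choose k) * L + 1)
    refine ⟨M, fun γ _ χ S hS => ?_⟩
    obtain ⟨A, hAS, P, hPS, hAP, rfl, hP, h⟩ := hM γ χ S hS
    have hPne : P.Nonempty := card_pos.mp (by omega)
    obtain ⟨P', hP'P, hP', ha, h'⟩ := h.exists_insert_min' hAP hPne (L := L) (by omega)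
    have haA : P.min' hPne ∉ A := fun haA => (hAP _ haA _ (P.min'_mem hPne)).false
    refine ⟨_, insert_subset (hPS (P.min'_mem hPne)) hAS, P', hP'P.trans hPS, ?_,
      card_insert_of_notMem haA, hP', h'⟩
    intro x hx p hp
    rcases mem_insert.mp hx with rfl | hx
    · exact ha p hp
    · exact hAP x hx p (hP'P hp)

theorem exists_monochromatic_of_linearOrder [Fintype β] (k : ℕ) :
    ∃ N : ℕ, ∀ (γ : Type u) [LinearOrder γ] (χ : Finset γ → β) (S : Finset γ), N ≤ S.card →
      ∃ Z ⊆ S, Z.card = k + 1 ∧ ∃ c, ∀ T ⊆ Z, T.card = k → χ T = c := by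
  induction k with
  | zero =>
    refine ⟨1, fun γ _ χ S hS => ?_⟩
    obtain ⟨s, hs⟩ := card_pos.mp hS
    exact ⟨{s}, singleton_subset_iff.mpr hs, rfl, χ ∅, fun T _ hT => by rw [card_eq_zero.mp hT]⟩
  | succ k ih =>
    obtain ⟨N, hN⟩ := ih
    obtain ⟨M, hM⟩ := exists_endHomogeneous_s3 (β := β) k N 1
    refine ⟨M, fun γ _ χ S hS => ?_⟩
    obtain ⟨A, hAS, P, hPS, hAP, hA, hP, h⟩ := hM γ χ S hS
    obtain ⟨x, hx⟩ := card_pos.mp hP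
    obtain ⟨Z, hZA, hZ, c, hc⟩ := hN γ (fun Q => χ (insert x Q)) A hA.ge
    have hxZ : x ∉ Z := fun hxZ => (hAP x (hZA hxZ) x hx).false
    exact ⟨insert x Z, insert_subset (hPS hx) (hZA.trans hAS),
      by rw [card_insert_of_notMem hxZ, hZ], c, h.monochromatic_insert hAP hx hZA hZ hc⟩

theorem exists_monochromatic [Fintype β] (k : ℕ) :
    ∃ N : ℕ, ∀ (γ : Type u) (χ : Finset γ → β) (S : Finset γ), N ≤ S.card →
      ∃ Z ⊆ S, Z.card = k + 1 ∧ ∃ c, ∀ T ⊆ Z, T.card = k → χ T = c := by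
  obtain ⟨N, hN⟩ := exists_monochromatic_of_linearOrder (β := β) k
  exact ⟨N, fun γ => letI := (WellOrderingRel.isWellOrder (α := γ)).linearOrder; hN γ⟩

end Ramsey

namespace Matrix

variable {n 𝕜 : Type*} [Fintype n] [RCLike 𝕜]
open scoped ComplexOrder

lemma PosSemidef.exists_mul_eq_and_trace_mul_eq {A B : Matrix n n 𝕜} (hA : A.PosSemidef)
    (hB : B.PosSemidef) :
    ∃ P M Q : Matrix n n 𝕜, A * B = Pᴴ * M * Q ∧ (A * B).trace = (M * Mᴴ).trace := by
  -- write `A = PᴴP`, `B = QᴴQ` and take `M = PQᴴ`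
  classical
  open scoped MatrixOrder in
  obtain ⟨P, rfl⟩ := CStarAlgebra.nonneg_iff_eq_star_mul_self.mp hA.nonneg
  open scoped MatrixOrder in
  obtain ⟨Q, rfl⟩ := CStarAlgebra.nonneg_iff_eq_star_mul_self.mp hB.nonneg
  refine ⟨P, P * Qᴴ, Q, by simp only [star_eq_conjTranspose, mul_assoc], ?_⟩
  simp only [star_eq_conjTranspose, conjTranspose_mul, conjTranspose_conjTranspose]
  rw [mul_assoc, trace_mul_comm, mul_assoc, mul_assoc, mul_assoc]

lemma PosSemidef.trace_mul_nonneg {A B : Matrix n n 𝕜} (hA : A.PosSemidef) (hB : B.PosSemidef) :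
    0 ≤ (A * B).trace := by
  obtain ⟨P, M, Q, -, htr⟩ := hA.exists_mul_eq_and_trace_mul_eq hB
  exact htr ▸ (posSemidef_self_mul_conjTranspose M).trace_nonneg

lemma PosSemidef.trace_mul_eq_zero_iff {A B : Matrix n n 𝕜} (hA : A.PosSemidef)
    (hB : B.PosSemidef) : (A * B).trace = 0 ↔ A * B = 0 := by
  obtain ⟨P, M, Q, hAB, htr⟩ := hA.exists_mul_eq_and_trace_mul_eq hB
  refine ⟨fun h => ?_, fun h => by rw [h, trace_zero]⟩
  rw [htr, trace_mul_conjTranspose_self_eq_zero_iff] at h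
  rw [hAB, h, mul_zero, zero_mul]

lemma sum_trace_mul_eq_zero_iff {ι : Type*} {s : Finset ι} {A B : ι → Matrix n n 𝕜}
    (hA : ∀ i ∈ s, (A i).PosSemidef) (hB : ∀ i ∈ s, (B i).PosSemidef) :
    ∑ i ∈ s, (A i * B i).trace = 0 ↔ ∀ i ∈ s, A i * B i = 0 := by
  rw [sum_eq_zero_iff_of_nonneg fun i hi => (hA i hi).trace_mul_nonneg (hB i hi)]
  exact forall₂_congr fun i hi => (hA i hi).trace_mul_eq_zero_iff (hB i hi)

lemma range_mulVecLin_le_ker_iff {m l R : Type*} [Fintype l] [CommRing R] {A : Matrix m n R}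
    {B : Matrix n l R} :
    LinearMap.range B.mulVecLin ≤ LinearMap.ker A.mulVecLin ↔ A * B = 0 := by
  rw [LinearMap.range_le_ker_iff, ← mulVecLin_mul]
  classical
  rw [← Matrix.toLin'_apply', map_eq_zero_iff _ Matrix.toLin'.injective]

end Matrix

lemma Finset.biSup_erase_lt_biSup_iff {ι α : Type*} [CompleteLattice α] [DecidableEq ι]
    {u : ι → α} {Z : Finset ι} {z : ι} (hz : z ∈ Z) :
    ⨆ x ∈ Z.erase z, u x < ⨆ x ∈ Z, u x ↔ ¬ u z ≤ ⨆ x ∈ Z.erase z, u x := by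
  have hZ : ⨆ x ∈ Z, u x = u z ⊔ ⨆ x ∈ Z.erase z, u x := by rw [← iSup_insert, insert_erase hz]
  rw [hZ]
  exact right_lt_sup

namespace Submodule

variable {ι α K V : Type*} [DivisionRing K] [AddCommGroup V] [Module K V] [FiniteDimensional K V]

theorem card_le_finrank_biSup [DecidableEq α] (u : α → Submodule K V) (Z : Finset α)
    (hZ : ∀ z ∈ Z, ¬ u z ≤ ⨆ y ∈ Z.erase z, u y) : Z.card ≤ finrank K ↥(⨆ z ∈ Z, u z) := by
  induction Z using Finset.induction_on with
  | empty => simp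
  | insert a s ha ih =>
    have hs : ∀ z ∈ s, ¬ u z ≤ ⨆ y ∈ s.erase z, u y := fun z hz hle =>
      hZ z (mem_insert_of_mem hz) <| hle.trans <|
        biSup_mono fun y hy => erase_subset_erase z (subset_insert a s) hy
    have hlt : ⨆ y ∈ s, u y < ⨆ y ∈ insert a s, u y := by
      simpa [ha] using (Finset.biSup_erase_lt_biSup_iff (u := u) (mem_insert_self a s)).2
        (hZ a (mem_insert_self a s))
    rw [card_insert_of_notMem ha]
    exact (ih hs).trans_lt (finrank_lt_finrank_of_lt hlt) |>.succ_le

theorem card_le_finrank_of_forall_exists_not_le [DecidableEq α] (u : ι → α → Submodule K V)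
    (Z : Finset α)
    (hrank : ∀ i, ∀ y ∈ Z, ∀ z ∈ Z,
      finrank K ↥(⨆ x ∈ Z.erase y, u i x) = finrank K ↥(⨆ x ∈ Z.erase z, u i x))
    (hnot : ∀ z ∈ Z, ∃ i, ¬ u i z ≤ ⨆ x ∈ Z.erase z, u i x) : Z.card ≤ finrank K V := by
  rcases Z.eq_empty_or_nonempty with rfl | ⟨z₀, hz₀⟩
  · simp
  obtain ⟨i, hi⟩ := hnot z₀ hz₀
  have hlt₀ := finrank_lt_finrank_of_lt ((Finset.biSup_erase_lt_biSup_iff hz₀).2 hi)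
  refine (card_le_finrank_biSup (u i) Z fun z hz => ?_).trans (finrank_le _)
  rw [← Finset.biSup_erase_lt_biSup_iff hz]
  refine Submodule.lt_of_le_of_finrank_lt_finrank (biSup_mono fun x hx => mem_of_mem_erase hx) ?_
  rwa [hrank i z hz z₀ hz₀]

end Submodule

open Matrix in
open scoped ComplexOrder in
lemma exists_not_range_le_biSup_range {ι α n 𝕜 : Type*} [Fintype ι] [Fintype n] [RCLike 𝕜]
    {a : ι → Matrix n n 𝕜} {b : ι → α → Matrix n n 𝕜} {T : Finset α} {s : α}
    (ha : ∀ i, (a i).PosSemidef) (hbs : ∀ i, (b i s).PosSemidef)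
    (hbT : ∀ i, ∀ t ∈ T, (b i t).PosSemidef)
    (hT : ∀ t ∈ T, ∑ i, (a i * b i t).trace = 0) (hs : ∑ i, (a i * b i s).trace ≠ 0) :
    ∃ i, ¬ LinearMap.range (b i s).mulVecLin ≤ ⨆ t ∈ T, LinearMap.range (b i t).mulVecLin := by
  have hzero {t : α} (hbt : ∀ i, (b i t).PosSemidef) :
      ∑ i, (a i * b i t).trace = 0 ↔ ∀ i, a i * b i t = 0 := by
    simpa using sum_trace_mul_eq_zero_iff (s := univ) (fun i _ => ha i) (fun i _ => hbt i)
  by_contra! hle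
  refine hs <| (hzero hbs).2 fun i => range_mulVecLin_le_ker_iff.1 ?_
  refine (hle i).trans <| iSup₂_le fun t ht => range_mulVecLin_le_ker_iff.2 ?_
  exact (hzero fun j => hbT j t ht).1 (hT t ht) i

theorem statement_3_general (k m : ℕ) :
    ∃ N : ℕ, 0 < N ∧
      ∀ (α : Type) (S : Finset α)
        (a : Fin m → Finset α → Matrix (Fin k) (Fin k) ℝ)
        (b : Fin m → α → Matrix (Fin k) (Fin k) ℝ),
        k ≤ S.card →
        (∀ i (T : Finset α), T ⊆ S → T.card = k → (a i T).PosSemidef) →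
        (∀ i s, s ∈ S → (b i s).PosSemidef) →
        (∀ T : Finset α, T ⊆ S → T.card = k → ∀ s ∈ S,
          ((∑ i : Fin m, (a i T * b i s).trace) = 0 ↔ s ∈ T)) →
        S.card < N := by
  obtain ⟨N, hN⟩ := exists_monochromatic (β := Fin m → Fin (k + 1)) k
  refine ⟨N + 1, N.succ_pos, fun α S a b _ ha hb hab => ?_⟩
  by_contra! hS
  classical
  let u : Fin m → α → Submodule ℝ (Fin k → ℝ) := fun i s => LinearMap.range (b i s).mulVecLin
  let χ : Finset α → Fin m → Fin (k + 1) := fun T i =>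
    ⟨finrank ℝ ↥(⨆ t ∈ T, u i t),
      Nat.lt_succ_of_le <| (Submodule.finrank_le _).trans_eq (finrank_fin_fun ℝ)⟩
  obtain ⟨Z, hZS, hZ, c, hc⟩ := hN α χ S (by omega)
  have hT : ∀ z ∈ Z, Z.erase z ⊆ S ∧ (Z.erase z).card = k := fun z hz =>
    ⟨(erase_subset z Z).trans hZS, by rw [card_erase_of_mem hz, hZ]; rfl⟩
  have hnot : ∀ z ∈ Z, ∃ i, ¬ u i z ≤ ⨆ t ∈ Z.erase z, u i t := by
    intro z hz
    obtain ⟨hTS, hTk⟩ := hT z hz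
    exact exists_not_range_le_biSup_range (fun i => ha i _ hTS hTk) (fun i => hb i z (hZS hz))
      (fun i t ht => hb i t (hTS ht)) (fun t ht => (hab _ hTS hTk t (hTS ht)).2 ht)
      (fun h => notMem_erase z Z ((hab _ hTS hTk z (hZS hz)).1 h))
  have hcard := Submodule.card_le_finrank_of_forall_exists_not_le u Z
    (fun i y hy z hz => congrArg (fun c : Fin m → Fin (k + 1) => (c i : ℕ))
      ((hc _ (erase_subset y Z) (hT y hy).2).trans (hc _ (erase_subset z Z) (hT z hz).2).symm))
    hnot
  rw [hZ, finrank_fin_fun] at hcard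
  omega

/-- (Averkov's main lemma.) For all positive integers `k` and `m` there is a
positive integer `N` (e.g. the Ramsey number `R_k(k+1; (k+1)^m)`) such that: if `S` is a finite
set with `|S| ≥ k` and for each `i ∈ [m]` there are maps `aᵢ : binom(S,k) → S₊ᵏ` and
`bᵢ : S → S₊ᵏ` with `Σᵢ tr(aᵢ(T) bᵢ(s)) = 0 ↔ s ∈ T`, then `|S| < N`. -/
theorem statement_3 (k m : ℕ) (hk : 0 < k) (hm : 0 < m) :
    ∃ N : ℕ, 0 < N ∧
      ∀ (α : Type) (S : Finset α)
        (a : Fin m → Finset α → Matrix (Fin k) (Fin k) ℝ)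
        (b : Fin m → α → Matrix (Fin k) (Fin k) ℝ),
        k ≤ S.card →
        (∀ i (T : Finset α), T ⊆ S → T.card = k → (a i T).PosSemidef) →
        (∀ i s, s ∈ S → (b i s).PosSemidef) →
        (∀ T : Finset α, T ⊆ S → T.card = k → ∀ s ∈ S,
          ((∑ i : Fin m, (a i T * b i s).trace) = 0 ↔ s ∈ T)) →
        S.card < N :=
  statement_3_general k m
end

section
/- If a proper convex cone C ⊆ ℝ^n has a proper (K_1 × ⋯ × K_m)-lift, where K_1, …, K_m are closed convex cones, then for each i = 1, …, m there exist maps a_i : C* → K_i* and b_i : C → K_i such that ⟨x, y⟩ = Σ_{i=1}^m ⟨b_i(x), a_i(y)⟩ for all x ∈ C and y ∈ C*. -/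
open scoped RealInnerProductSpace

/-!
For `x ∈ C` take `b(x)` to be any preimage of `x` in `(K₁ × ⋯ × Kₘ) ∩ L`. For `y ∈ C*` the
functional `w ↦ ⟨π w, y⟩` on `L` is nonnegative on `(K₁ × ⋯ × Kₘ) ∩ L`. Because `L` meets the
relative interior of the product cone, the M. Riesz extension theorem
extends it to a functional on the whole product that is nonnegative on `K₁ × ⋯ × Kₘ`; its
components, read off by the Riesz representation in each factor, are `aᵢ(y) ∈ Kᵢ*`. Then
`⟨x, y⟩ = ⟨π b(x), y⟩ = Σᵢ ⟨bᵢ(x), aᵢ(y)⟩`.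
-/

namespace IsClosedConvexCone

variable {E : Type*} [AddCommGroup E] [Module ℝ E] [TopologicalSpace E] {K : Set E}

theorem add_mem (hK : IsClosedConvexCone K) {x y : E} (hx : x ∈ K) (hy : y ∈ K) : x + y ∈ K := by
  have hmid := hK.2.1 hx hy (by norm_num : (0 : ℝ) ≤ 1 / 2) (by norm_num : (0 : ℝ) ≤ 1 / 2)
    (by norm_num)
  convert hK.2.2.2 _ hmid 2 (by norm_num) using 1
  module

def toPointedCone_s6 (hK : IsClosedConvexCone K) : PointedCone ℝ E where
  carrier := K
  add_mem' := hK.add_mem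
  zero_mem' := hK.2.2.1
  smul_mem' c _ hx := hK.2.2.2 _ hx c c.2

theorem pi {ι : Type*} {E : ι → Type*} [∀ i, AddCommGroup (E i)] [∀ i, Module ℝ (E i)]
    [∀ i, TopologicalSpace (E i)] {K : ∀ i, Set (E i)} (hK : ∀ i, IsClosedConvexCone (K i)) :
    IsClosedConvexCone {x : ∀ i, E i | ∀ i, x i ∈ K i} := by
  refine ⟨?_, ?_, fun i => (hK i).2.2.1, fun x hx t ht i => (hK i).2.2.2 _ (hx i) t ht⟩
  · simpa only [Set.ofPred_forall, Set.preimage] using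
      isClosed_iInter fun i => (hK i).1.preimage (continuous_apply i)
  · intro x hx y hy a b ha hb hab i
    exact (hK i).2.1 (hx i) (hy i) ha hb hab

end IsClosedConvexCone

section Extension

variable {V : Type*} [AddCommGroup V] [Module ℝ V] [TopologicalSpace V] [ContinuousAdd V]
  [ContinuousSMul ℝ V]

theorem exists_pos_add_smul_mem_of_mem_intrinsicInterior {s : Set V} {x u : V}
    (hx : x ∈ intrinsicInterior ℝ s) (hu : u ∈ (affineSpan ℝ s).direction) :
    ∃ t : ℝ, 0 < t ∧ x + t • u ∈ s := by
  obtain ⟨p, hp, rfl⟩ := mem_intrinsicInterior.mp hx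
  let c : ℝ → affineSpan ℝ s := fun t =>
    ⟨t • u +ᵥ (p : V), AffineSubspace.vadd_mem_of_mem_direction (Submodule.smul_mem _ t hu) p.2⟩
  have hc : Continuous c :=
    ((continuous_id.smul continuous_const).add continuous_const).subtype_mk _
  have hc0 : c 0 = p := by ext; simp [c]
  have hnhds : ∀ᶠ t in nhds (0 : ℝ), c t ∈ ((↑) : affineSpan ℝ s → V) ⁻¹' s :=
    hc.continuousAt.preimage_mem_nhds (hc0 ▸ mem_interior_iff_mem_nhds.mp hp)
  obtain ⟨t, ht, hts⟩ := hnhds.exists_gt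
  exact ⟨t, ht, by simpa [c, add_comm] using hts⟩

variable (K : PointedCone ℝ V) {L : Submodule ℝ V}

theorem PointedCone.exists_add_mem_of_inter_intrinsicInterior
    (hL : ((L : Set V) ∩ intrinsicInterior ℝ (K : Set V)).Nonempty) {w : V}
    (hw : w ∈ Submodule.span ℝ (K : Set V) ⊔ L) : ∃ x ∈ L, x + w ∈ K := by
  obtain ⟨x₀, hx₀L, hx₀K⟩ := hL
  obtain ⟨u, hu, v, hv, rfl⟩ := Submodule.mem_sup.mp hw
  have hu' : u ∈ (affineSpan ℝ (K : Set V)).direction := by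
    rw [direction_affineSpan, vectorSpan_eq_span_vsub_set_right ℝ K.zero_mem]
    simpa using hu
  obtain ⟨t, ht, htK⟩ := exists_pos_add_smul_mem_of_mem_intrinsicInterior hx₀K hu'
  refine ⟨t⁻¹ • x₀ - v, L.sub_mem (L.smul_mem _ hx₀L) hv, ?_⟩
  have heq : t⁻¹ • x₀ - v + (u + v) = t⁻¹ • (x₀ + t • u) := by
    rw [smul_add, smul_smul, inv_mul_cancel₀ ht.ne', one_smul]
    abel
  rw [heq]
  exact K.smul_mem (inv_pos.2 ht).le htK

theorem PointedCone.exists_extension_nonneg_of_inter_intrinsicInterior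
    (hL : ((L : Set V) ∩ intrinsicInterior ℝ (K : Set V)).Nonempty)
    (φ : L →ₗ[ℝ] ℝ) (hφ : ∀ x : L, (x : V) ∈ K → 0 ≤ φ x) :
    ∃ g : V →ₗ[ℝ] ℝ, (∀ x : L, g x = φ x) ∧ ∀ x ∈ K, 0 ≤ g x := by
  -- The Riesz extension only applies where every vector can be pushed into `K` by an element
  -- of `L`; by the relative-interior condition this is the case on `span K ⊔ L`.
  set W := Submodule.span ℝ (K : Set V) ⊔ L
  have hKW : ∀ x ∈ K, x ∈ W := fun x hx => Submodule.mem_sup_left (Submodule.subset_span hx)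
  let f : W →ₗ.[ℝ] ℝ :=
    ⟨L.comap W.subtype, φ ∘ₗ W.subtype.restrict (q := L) fun _ hx => hx⟩
  obtain ⟨g₀, hg₀f, hg₀K⟩ := riesz_extension (K.comap W.subtype) f (fun x hx => hφ _ hx)
    fun w => by
      obtain ⟨x, hxL, hxK⟩ := K.exists_add_mem_of_inter_intrinsicInterior hL w.2
      exact ⟨⟨⟨x, Submodule.mem_sup_right hxL⟩, hxL⟩, hxK⟩
  obtain ⟨g, hg⟩ := LinearMap.exists_extend g₀
  have hgW : ∀ (x : V) (hx : x ∈ W), g x = g₀ ⟨x, hx⟩ := fun x hx =>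
    congrArg (· ⟨x, hx⟩) hg
  refine ⟨g, fun x => ?_, fun x hx => ?_⟩
  · rw [hgW x (Submodule.mem_sup_right x.2)]
    exact hg₀f ⟨_, x.2⟩
  · rw [hgW x (hKW x hx)]
    exact hg₀K _ hx

end Extension

section Pi

variable {ι : Type*} [Fintype ι] [DecidableEq ι] {E : ι → Type*} [∀ i, NormedAddCommGroup (E i)]
  [∀ i, InnerProductSpace ℝ (E i)] [∀ i, FiniteDimensional ℝ (E i)]

theorem LinearMap.exists_eq_sum_inner_pi (g : (∀ i, E i) →ₗ[ℝ] ℝ) :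
    ∃ k : ∀ i, E i, ∀ x, g x = ∑ i, ⟪x i, k i⟫ := by
  refine ⟨fun i => (InnerProductSpace.toDual ℝ (E i)).symm
    (g ∘ₗ LinearMap.single ℝ E i).toContinuousLinearMap, fun x => ?_⟩
  simp_rw [real_inner_comm _ (x _), InnerProductSpace.toDual_symm_apply]
  conv_lhs => rw [← Finset.univ_sum_single x, map_sum]
  rfl

end Pi

section Factorization

variable {ι : Type*} [Fintype ι] {E : ι → Type*} [∀ i, NormedAddCommGroup (E i)]
  [∀ i, InnerProductSpace ℝ (E i)] [∀ i, FiniteDimensional ℝ (E i)]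
  {F : Type*} [NormedAddCommGroup F] [InnerProductSpace ℝ F]

theorem exists_pi_dualCone_inner_map_eq_sum {K : ∀ i, Set (E i)}
    (hK : ∀ i, IsClosedConvexCone (K i)) (π : (∀ i, E i) →ₗ[ℝ] F) {L : Submodule ℝ (∀ i, E i)}
    (hL : ((L : Set (∀ i, E i)) ∩ intrinsicInterior ℝ {x | ∀ i, x i ∈ K i}).Nonempty)
    {y : F} (hy : y ∈ dualCone (π '' ({x | ∀ i, x i ∈ K i} ∩ L))) :
    ∃ k : ∀ i, E i, (∀ i, k i ∈ dualCone (K i)) ∧ ∀ w ∈ L, ⟪π w, y⟫ = ∑ i, ⟪w i, k i⟫ := by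
  classical
  obtain ⟨g, hgL, hgK⟩ :=
    (IsClosedConvexCone.pi hK).toPointedCone_s6.exists_extension_nonneg_of_inter_intrinsicInterior hL
      ((innerSL ℝ y).toLinearMap ∘ₗ π ∘ₗ L.subtype) fun w hw => hy _ ⟨w, ⟨hw, w.2⟩, rfl⟩
  obtain ⟨k, hk⟩ := g.exists_eq_sum_inner_pi
  refine ⟨k, fun i z hz => ?_, fun w hw => ?_⟩
  · have hsingle : (Pi.single i z : ∀ j, E j) ∈ {x : ∀ j, E j | ∀ j, x j ∈ K j} := by
      intro j
      rcases eq_or_ne j i with rfl | hj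
      · simpa using hz
      · simpa [Pi.single_eq_of_ne hj] using (hK j).2.2.1
    have := hgK _ hsingle
    rwa [hk, Finset.sum_eq_single i (fun j _ hj => by simp [Pi.single_eq_of_ne hj]) (by simp),
      Pi.single_eq_same, real_inner_comm] at this
  · rw [real_inner_comm, ← hk, hgL ⟨w, hw⟩]
    rfl

end Factorization

theorem statement_6_general {n m : ℕ} (d : Fin m → ℕ)
    (C : Set (EuclideanSpace ℝ (Fin n)))
    (K : ∀ i : Fin m, Set (EuclideanSpace ℝ (Fin (d i))))
    (hK : ∀ i, IsClosedConvexCone (K i))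
    (hlift : ∃ (π : (∀ i, EuclideanSpace ℝ (Fin (d i))) →ₗ[ℝ] EuclideanSpace ℝ (Fin n))
        (L : Submodule ℝ (∀ i, EuclideanSpace ℝ (Fin (d i)))),
        C = π '' ({x | ∀ i, x i ∈ K i} ∩ (L : Set (∀ i, EuclideanSpace ℝ (Fin (d i))))) ∧
        ((L : Set (∀ i, EuclideanSpace ℝ (Fin (d i)))) ∩
          intrinsicInterior ℝ {x | ∀ i, x i ∈ K i}).Nonempty) :
    ∃ (a : ∀ i : Fin m, EuclideanSpace ℝ (Fin n) → EuclideanSpace ℝ (Fin (d i)))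
      (b : ∀ i : Fin m, EuclideanSpace ℝ (Fin n) → EuclideanSpace ℝ (Fin (d i))),
      (∀ i, ∀ y ∈ dualCone C, a i y ∈ dualCone (K i)) ∧
      (∀ i, ∀ x ∈ C, b i x ∈ K i) ∧
      ∀ x ∈ C, ∀ y ∈ dualCone C, ⟪x, y⟫ = ∑ i : Fin m, ⟪b i x, a i y⟫ := by
  obtain ⟨π, L, rfl, hL⟩ := hlift
  choose! a haK hπa using fun y (hy : y ∈ dualCone _) =>
    exists_pi_dualCone_inner_map_eq_sum hK π hL hy
  choose! b hb hπb using fun x (hx : x ∈ π '' ({x | ∀ i, x i ∈ K i} ∩ L)) => hx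
  refine ⟨fun i y => a y i, fun i x => b x i, fun i y hy => haK y hy i,
    fun i x hx => (hb x hx).1 i, fun x hx y hy => ?_⟩
  calc ⟪x, y⟫ = ⟪π (b x), y⟫ := by rw [hπb x hx]
    _ = _ := hπa y hy _ (hb x hx).2

/-- (Factorization theorem.) If a proper convex cone `C ⊆ ℝⁿ` has a proper
`K₁ × ⋯ × Kₘ`-lift, then there are maps `aᵢ : C* → Kᵢ*` and `bᵢ : C → Kᵢ` such that
`⟨x, y⟩ = Σᵢ ⟨bᵢ(x), aᵢ(y)⟩` for all `x ∈ C`, `y ∈ C*`. -/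
theorem statement_6 {n m : ℕ} (hm : 0 < m) (d : Fin m → ℕ)
    (C : Set (EuclideanSpace ℝ (Fin n))) (hC : IsProperCone C)
    (K : ∀ i : Fin m, Set (EuclideanSpace ℝ (Fin (d i))))
    (hK : ∀ i, IsClosedConvexCone (K i))
    (hlift : ∃ (π : (∀ i, EuclideanSpace ℝ (Fin (d i))) →ₗ[ℝ] EuclideanSpace ℝ (Fin n))
        (L : Submodule ℝ (∀ i, EuclideanSpace ℝ (Fin (d i)))),
        C = π '' ({x | ∀ i, x i ∈ K i} ∩ (L : Set (∀ i, EuclideanSpace ℝ (Fin (d i))))) ∧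
        ((L : Set (∀ i, EuclideanSpace ℝ (Fin (d i)))) ∩
          intrinsicInterior ℝ {x | ∀ i, x i ∈ K i}).Nonempty) :
    ∃ (a : ∀ i : Fin m, EuclideanSpace ℝ (Fin n) → EuclideanSpace ℝ (Fin (d i)))
      (b : ∀ i : Fin m, EuclideanSpace ℝ (Fin n) → EuclideanSpace ℝ (Fin (d i))),
      (∀ i, ∀ y ∈ dualCone C, a i y ∈ dualCone (K i)) ∧
      (∀ i, ∀ x ∈ C, b i x ∈ K i) ∧
      ∀ x ∈ C, ∀ y ∈ dualCone C, ⟪x, y⟫ = ∑ i : Fin m, ⟪b i x, a i y⟫ :=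
  statement_6_general d C K hK hlift
end

section
/- Suppose C ⊆ ℝ^n is a proper convex cone and there exist a positive integer m and closed convex cones K̃_1, …, K̃_m such that C has a (K̃_1 × ⋯ × K̃_m)-lift and ℓ(K̃_i) ≤ k+1 for all i ∈ [m]. Then there exist a positive integer m' and closed convex cones K_1, …, K_{m'} such that C has a proper (K_1 × ⋯ × K_{m'})-lift and ℓ(K_i) ≤ k+1 for all i ∈ [m']. -/
open scoped RealInnerProductSpace

/-!
Pick `z` in the relative interior of the slice `S = (K̃₁ × ⋯ × K̃ₘ) ∩ L` and replace each `K̃ᵢ`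
by the face `Kᵢ` of `K̃ᵢ` generated by `zᵢ`. Since `z` can be pushed a little beyond every point of
`S` while staying in `S`, every point of `S` is dominated by a multiple of `z`, so
`S = (K₁ × ⋯ × Kₘ) ∩ L` and the projection still has image `C`. Now `z ∈ L` lies in the relative
interior of `K₁ × ⋯ × Kₘ`, so the new lift is proper, and faces of `K̃ᵢ` have no longer face
chains than `K̃ᵢ` itself.
-/

open Set Filter Topology

section IntrinsicInterior

variable {E : Type*} [NormedAddCommGroup E] [NormedSpace ℝ E]

theorem mem_intrinsicInterior_iff_nhds {s : Set E} {z : E} :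
    z ∈ intrinsicInterior ℝ s ↔
      z ∈ affineSpan ℝ s ∧ ∃ U ∈ 𝓝 z, U ∩ (affineSpan ℝ s : Set E) ⊆ s := by
  constructor
  · rintro ⟨y, hy, rfl⟩
    rw [mem_interior_iff_mem_nhds, nhds_subtype, Filter.mem_comap] at hy
    obtain ⟨U, hU, hsub⟩ := hy
    exact ⟨y.2, U, hU, fun x ⟨hxU, hxA⟩ => hsub (show (⟨x, hxA⟩ : affineSpan ℝ s) ∈ _ from hxU)⟩
  · rintro ⟨hzA, U, hU, hsub⟩
    refine mem_intrinsicInterior.2 ⟨⟨z, hzA⟩, ?_, rfl⟩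
    rw [mem_interior_iff_mem_nhds, nhds_subtype, Filter.mem_comap]
    exact ⟨U, hU, fun a ha => hsub ⟨ha, a.2⟩⟩

theorem exists_add_smul_sub_mem_of_mem_intrinsicInterior {s : Set E} {z w : E}
    (hz : z ∈ intrinsicInterior ℝ s) (hw : w ∈ s) :
    ∃ t : ℝ, 0 < t ∧ z + t • (z - w) ∈ s := by
  obtain ⟨hzA, U, hU, hsub⟩ := mem_intrinsicInterior_iff_nhds.mp hz
  have hcont : Continuous fun t : ℝ => z + t • (z - w) := by fun_prop
  have hnear : ∀ᶠ t in 𝓝[>] (0 : ℝ), z + t • (z - w) ∈ U :=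
    nhdsWithin_le_nhds (hcont.continuousAt.preimage_mem_nhds (by simpa using hU))
  obtain ⟨t, htU, ht⟩ := (hnear.and self_mem_nhdsWithin).exists
  refine ⟨t, ht, hsub ⟨htU, ?_⟩⟩
  have hline : z + t • (z - w) = AffineMap.lineMap z w (-t) := by
    rw [AffineMap.lineMap_apply_module']
    module
  rw [hline]
  exact AffineMap.lineMap_mem _ hzA (subset_affineSpan ℝ s hw)

theorem mem_intrinsicInterior_of_forall_exists_add_smul_sub_mem [FiniteDimensional ℝ E]
    {s : Set E} {z : E} (hs : Convex ℝ s) (hz : z ∈ s)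
    (hext : ∀ y ∈ s, ∃ t : ℝ, 0 < t ∧ z + t • (z - y) ∈ s) :
    z ∈ intrinsicInterior ℝ s := by
  obtain ⟨u, hu⟩ := Set.Nonempty.intrinsicInterior hs ⟨z, hz⟩
  obtain ⟨-, U, hU, hUs⟩ := mem_intrinsicInterior_iff_nhds.mp hu
  obtain ⟨ε, hε, hp⟩ := hext u (intrinsicInterior_subset hu)
  -- `z` is the image of `u` under the homothety centred at `p = z + ε (z - u)` with ratio `c`,
  -- which maps `s` into itself and preserves `affineSpan ℝ s`.
  set p := z + ε • (z - u)
  set c : ℝ := ε / (1 + ε)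
  have hc : 0 < c := by positivity
  have hc1 : c ≤ 1 := (div_le_one (by positivity)).2 (by linarith)
  have hpA : p ∈ affineSpan ℝ s := subset_affineSpan ℝ s hp
  have hzu : AffineMap.homothety p c⁻¹ z = u := by
    rw [AffineMap.homothety_apply, vsub_eq_sub, vadd_eq_add]
    simp only [p, c]
    match_scalars <;> field_simp <;> ring
  refine mem_intrinsicInterior_iff_nhds.2
    ⟨subset_affineSpan ℝ s hz, AffineMap.homothety p c⁻¹ ⁻¹' U, ?_, ?_⟩
  · exact (AffineMap.homothety_continuous p c⁻¹).continuousAt.preimage_mem_nhds (hzu ▸ hU)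
  · rintro y ⟨hyU, hyA⟩
    have hx : AffineMap.homothety p c⁻¹ y ∈ s :=
      hUs ⟨hyU, AffineMap.homothety_mem hpA _ hyA⟩
    have hy : y = AffineMap.lineMap p (AffineMap.homothety p c⁻¹ y) c := by
      rw [← AffineMap.homothety_eq_lineMap, ← AffineMap.homothety_mul_apply,
        mul_inv_cancel₀ hc.ne', AffineMap.homothety_one, AffineMap.id_apply]
    rw [hy]
    exact hs.lineMap_mem hp hx ⟨hc.le, hc1⟩

end IntrinsicInterior

section Cones

variable {V : Type*} [AddCommGroup V] [Module ℝ V]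

def IsConvexCone (K : Set V) : Prop :=
  Convex ℝ K ∧ (0 : V) ∈ K ∧ ∀ x ∈ K, ∀ t : ℝ, 0 ≤ t → t • x ∈ K

namespace IsConvexCone

variable {K : Set V}

theorem zero_mem (hK : IsConvexCone K) : (0 : V) ∈ K := hK.2.1

theorem smul_mem (hK : IsConvexCone K) {x : V} (hx : x ∈ K) {t : ℝ} (ht : 0 ≤ t) :
    t • x ∈ K :=
  hK.2.2 x hx t ht

theorem add_mem (hK : IsConvexCone K) {x y : V} (hx : x ∈ K) (hy : y ∈ K) : x + y ∈ K := by
  have hmid : (1 / 2 : ℝ) • x + (1 / 2 : ℝ) • y ∈ K :=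
    hK.1 hx hy (by norm_num) (by norm_num) (by norm_num)
  convert hK.smul_mem hmid (t := 2) (by norm_num) using 1
  module

theorem pi {ι : Type*} {W : ι → Type*} [∀ i, AddCommGroup (W i)] [∀ i, Module ℝ (W i)]
    {K : ∀ i, Set (W i)} (hK : ∀ i, IsConvexCone (K i)) :
    IsConvexCone {x : ∀ i, W i | ∀ i, x i ∈ K i} :=
  ⟨fun _ hx _ hy _ _ ha hb hab i => (hK i).1 (hx i) (hy i) ha hb hab,
    fun i => (hK i).zero_mem, fun _ hx _ ht i => (hK i).smul_mem (hx i) ht⟩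

theorem exists_sub_of_mem_span (hK : IsConvexCone K) {v : V} (hv : v ∈ Submodule.span ℝ K) :
    ∃ a ∈ K, ∃ b ∈ K, v = a - b := by
  induction hv using Submodule.span_induction with
  | mem x hx => exact ⟨x, hx, 0, hK.zero_mem, (sub_zero x).symm⟩
  | zero => exact ⟨0, hK.zero_mem, 0, hK.zero_mem, (sub_zero 0).symm⟩
  | add x y _ _ hx hy =>
    obtain ⟨a, ha, b, hb, rfl⟩ := hx
    obtain ⟨a', ha', b', hb', rfl⟩ := hy
    exact ⟨a + a', hK.add_mem ha ha', b + b', hK.add_mem hb hb', by abel⟩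
  | smul c x _ hx =>
    obtain ⟨a, ha, b, hb, rfl⟩ := hx
    rcases le_total 0 c with hc | hc
    · exact ⟨c • a, hK.smul_mem ha hc, c • b, hK.smul_mem hb hc, smul_sub c a b⟩
    · exact ⟨(-c) • b, hK.smul_mem hb (neg_nonneg.2 hc),
        (-c) • a, hK.smul_mem ha (neg_nonneg.2 hc), by module⟩

end IsConvexCone

theorem IsFace.trans {K F G : Set V} (hF : IsFace K F) (hG : IsFace F G) : IsFace K G :=
  ⟨hG.1.trans hF.1, hG.2.1, fun _ hx _ hy _ hα hα1 hmem =>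
    have hxy := hF.2.2 hx hy hα hα1 (hG.1 hmem)
    hG.2.2 hxy.1 hxy.2 hα hα1 hmem⟩

theorem FaceChainBound.of_isFace {K F : Set V} {m : ℕ} (hF : IsFace K F)
    (hK : FaceChainBound K m) : FaceChainBound F m :=
  fun l G hG hchain => hK l G (fun i => ⟨hF.trans (hG i).1, (hG i).2⟩) hchain

theorem IsFace.eq_inter_span {K F : Set V} (hF : IsFace K F) (hFc : IsConvexCone F) :
    F = K ∩ Submodule.span ℝ F := by
  refine Subset.antisymm (fun y hy => ⟨hF.1 hy, Submodule.subset_span hy⟩) ?_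
  rintro y ⟨hyK, hyF⟩
  obtain ⟨a, ha, b, hb, rfl⟩ := hFc.exists_sub_of_mem_span hyF
  have hmid : (1 / 2 : ℝ) • (a - b) + (1 - 1 / 2 : ℝ) • b ∈ F := by
    convert hFc.smul_mem ha (t := 1 / 2) (by norm_num) using 1
    module
  exact (hF.2.2 hyK (hF.1 hb) (by norm_num) (by norm_num) hmid).1

/-- For `z ∈ K`, the smallest face of the convex cone `K` containing `z`. -/
def generatedFace (K : Set V) (z : V) : Set V :=
  {y | y ∈ K ∧ ∃ μ : ℝ, 0 ≤ μ ∧ μ • z - y ∈ K}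

theorem generatedFace_subset (K : Set V) (z : V) : generatedFace K z ⊆ K := fun _ hy => hy.1

namespace IsConvexCone

variable {K : Set V}

theorem mem_generatedFace_self (hK : IsConvexCone K) {z : V} (hz : z ∈ K) :
    z ∈ generatedFace K z :=
  ⟨hz, 1, zero_le_one, by simpa using hK.zero_mem⟩

theorem convex_generatedFace (hK : IsConvexCone K) (z : V) : Convex ℝ (generatedFace K z) := by
  rintro x ⟨hxK, μ, hμ, hμK⟩ y ⟨hyK, ν, hν, hνK⟩ a b ha hb hab
  refine ⟨hK.1 hxK hyK ha hb hab, a * μ + b * ν, by positivity, ?_⟩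
  convert hK.1 hμK hνK ha hb hab using 1
  module

theorem isFace_generatedFace (hK : IsConvexCone K) (z : V) : IsFace K (generatedFace K z) := by
  have hleft : ∀ x ∈ K, ∀ y ∈ K, ∀ α : ℝ, 0 < α → α < 1 →
      α • x + (1 - α) • y ∈ generatedFace K z → x ∈ generatedFace K z := by
    rintro x hx y hy α hα hα1 ⟨-, μ, hμ, hμK⟩
    refine ⟨hx, μ / α, by positivity, ?_⟩
    have hsplit : (μ / α) • z - x
        = (1 / α) • (μ • z - (α • x + (1 - α) • y)) + ((1 - α) / α) • y := by
      match_scalars <;> field_simp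
      ring
    rw [hsplit]
    exact hK.add_mem (hK.smul_mem hμK (by positivity))
      (hK.smul_mem hy (div_nonneg (by linarith) hα.le))
  refine ⟨generatedFace_subset K z, hK.convex_generatedFace z, ?_⟩
  intro x hx y hy α hα hα1 hmem
  refine ⟨hleft x hx y hy α hα hα1 hmem, hleft y hy x hx (1 - α) (by linarith) (by linarith) ?_⟩
  convert hmem using 1
  module

theorem generatedFace (hK : IsConvexCone K) (z : V) : IsConvexCone (generatedFace K z) := by
  refine ⟨hK.convex_generatedFace z, ⟨hK.zero_mem, 0, le_rfl, by simpa using hK.zero_mem⟩, ?_⟩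
  rintro y ⟨hyK, μ, hμ, hμK⟩ t ht
  refine ⟨hK.smul_mem hyK ht, t * μ, by positivity, ?_⟩
  convert hK.smul_mem hμK ht using 1
  module

end IsConvexCone

theorem generatedFace_pi {ι : Type*} [Fintype ι] {W : ι → Type*} [∀ i, AddCommGroup (W i)]
    [∀ i, Module ℝ (W i)] {K : ∀ i, Set (W i)} (hK : ∀ i, IsConvexCone (K i))
    {z : ∀ i, W i} (hz : ∀ i, z i ∈ K i) :
    generatedFace {x | ∀ i, x i ∈ K i} z = {x | ∀ i, x i ∈ generatedFace (K i) (z i)} := by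
  refine Subset.antisymm (fun x ⟨hx, μ, hμ, hμK⟩ i => ⟨hx i, μ, hμ, hμK i⟩) fun x hx => ?_
  choose μ hμ hμK using fun i => (hx i).2
  refine ⟨fun i => (hx i).1, ∑ i, μ i, Finset.sum_nonneg fun i _ => hμ i, fun i => ?_⟩
  have hle : μ i ≤ ∑ j, μ j := Finset.single_le_sum (fun j _ => hμ j) (Finset.mem_univ i)
  convert (hK i).add_mem (hμK i) ((hK i).smul_mem (hz i) (sub_nonneg.2 hle)) using 1
  simp only [Pi.sub_apply, Pi.smul_apply]
  module

theorem IsClosedConvexCone.isConvexCone [TopologicalSpace V] {K : Set V}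
    (hK : IsClosedConvexCone K) : IsConvexCone K :=
  hK.2

theorem IsClosedConvexCone.generatedFace [TopologicalSpace V] [IsTopologicalAddGroup V]
    [ContinuousSMul ℝ V] [T2Space V] [FiniteDimensional ℝ V] {K : Set V}
    (hK : IsClosedConvexCone K) (z : V) :
    IsClosedConvexCone (generatedFace K z) := by
  have hface := hK.isConvexCone.isFace_generatedFace z
  refine ⟨?_, hK.isConvexCone.generatedFace z⟩
  rw [hface.eq_inter_span (hK.isConvexCone.generatedFace z)]
  exact hK.1.inter (Submodule.closed_of_finiteDimensional _)

end Cones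

section RelativeInterior

variable {E : Type*} [NormedAddCommGroup E] [NormedSpace ℝ E] {K S : Set E} {z : E}

theorem subset_generatedFace_of_mem_intrinsicInterior (hK : IsConvexCone K) (hSK : S ⊆ K)
    (hz : z ∈ intrinsicInterior ℝ S) : S ⊆ generatedFace K z := by
  intro w hw
  obtain ⟨t, ht, htS⟩ := exists_add_smul_sub_mem_of_mem_intrinsicInterior hz hw
  refine ⟨hSK hw, (1 + t) / t, by positivity, ?_⟩
  convert hK.smul_mem (hSK htS) (t := 1 / t) (by positivity) using 1
  match_scalars <;> field_simp

theorem mem_intrinsicInterior_generatedFace [FiniteDimensional ℝ E] (hK : IsConvexCone K)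
    (hz : z ∈ K) : z ∈ intrinsicInterior ℝ (generatedFace K z) := by
  refine mem_intrinsicInterior_of_forall_exists_add_smul_sub_mem (hK.convex_generatedFace z)
    (hK.mem_generatedFace_self hz) ?_
  rintro y ⟨hyK, μ, hμ, hμK⟩
  set t : ℝ := 1 / (μ + 1)
  have ht : 0 < t := by positivity
  refine ⟨t, ht, ?_, 1 + t, by positivity, ?_⟩
  · convert hK.add_mem (hK.smul_mem hμK ht.le) (hK.smul_mem hz (t := 2 * t) (by positivity))
      using 1
    simp only [t]
    match_scalars <;> field_simp
    ring
  · convert hK.smul_mem hyK ht.le using 1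
    module

end RelativeInterior

theorem statement_7_general {n k m : ℕ} (hm : 0 < m) (d : Fin m → ℕ)
    (C : Set (EuclideanSpace ℝ (Fin n)))
    (Kt : ∀ i : Fin m, Set (EuclideanSpace ℝ (Fin (d i))))
    (hKt : ∀ i, IsClosedConvexCone (Kt i))
    (hKtl : ∀ i, FaceChainBound (Kt i) (k + 1))
    (hlift : ∃ (π : (∀ i, EuclideanSpace ℝ (Fin (d i))) →ₗ[ℝ] EuclideanSpace ℝ (Fin n))
        (L : Submodule ℝ (∀ i, EuclideanSpace ℝ (Fin (d i)))),
        C = π '' ({x | ∀ i, x i ∈ Kt i} ∩ (L : Set (∀ i, EuclideanSpace ℝ (Fin (d i)))))) :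
    ∃ (m' : ℕ), 0 < m' ∧ ∃ (d' : Fin m' → ℕ)
      (K : ∀ i : Fin m', Set (EuclideanSpace ℝ (Fin (d' i)))),
      (∀ i, IsClosedConvexCone (K i)) ∧
      (∀ i, FaceChainBound (K i) (k + 1)) ∧
      ∃ (π' : (∀ i, EuclideanSpace ℝ (Fin (d' i))) →ₗ[ℝ] EuclideanSpace ℝ (Fin n))
        (L' : Submodule ℝ (∀ i, EuclideanSpace ℝ (Fin (d' i)))),
        C = π' '' ({x | ∀ i, x i ∈ K i} ∩ (L' : Set (∀ i, EuclideanSpace ℝ (Fin (d' i))))) ∧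
        ((L' : Set (∀ i, EuclideanSpace ℝ (Fin (d' i)))) ∩
          intrinsicInterior ℝ {x | ∀ i, x i ∈ K i}).Nonempty := by
  obtain ⟨π, L, rfl⟩ := hlift
  set P : Set (∀ i, EuclideanSpace ℝ (Fin (d i))) := {x | ∀ i, x i ∈ Kt i}
  have hP : IsConvexCone P := IsConvexCone.pi fun i => (hKt i).isConvexCone
  obtain ⟨z, hz⟩ := Set.Nonempty.intrinsicInterior (hP.1.inter L.convex)
    ⟨0, hP.zero_mem, L.zero_mem⟩
  have hzS := intrinsicInterior_subset hz
  have hface : generatedFace P z = {x | ∀ i, x i ∈ generatedFace (Kt i) (z i)} :=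
    generatedFace_pi (fun i => (hKt i).isConvexCone) hzS.1
  have hslice : P ∩ L = generatedFace P z ∩ L :=
    Subset.antisymm
      (fun w hw => ⟨subset_generatedFace_of_mem_intrinsicInterior hP inter_subset_left hz hw, hw.2⟩)
      (inter_subset_inter_left _ (generatedFace_subset P z))
  refine ⟨m, hm, d, fun i => generatedFace (Kt i) (z i), fun i => (hKt i).generatedFace (z i),
    fun i => (hKtl i).of_isFace ((hKt i).isConvexCone.isFace_generatedFace (z i)), π, L, ?_,
    z, hzS.2, ?_⟩
  · rw [← hface, ← hslice]
  · rw [← hface]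
    exact mem_intrinsicInterior_generatedFace hP hzS.1

/-- If a proper convex cone `C` has a `K̃₁ × ⋯ × K̃ₘ`-lift with
`ℓ(K̃ᵢ) ≤ k + 1` for all `i`, then it has a *proper* `K₁ × ⋯ × K_{m'}`-lift for some closed
convex cones `K₁, …, K_{m'}` with `ℓ(Kᵢ) ≤ k + 1` for all `i`. -/
theorem statement_7 {n k m : ℕ} (hm : 0 < m) (d : Fin m → ℕ)
    (C : Set (EuclideanSpace ℝ (Fin n))) (hC : IsProperCone C)
    (Kt : ∀ i : Fin m, Set (EuclideanSpace ℝ (Fin (d i))))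
    (hKt : ∀ i, IsClosedConvexCone (Kt i))
    (hKtl : ∀ i, FaceChainBound (Kt i) (k + 1))
    (hlift : ∃ (π : (∀ i, EuclideanSpace ℝ (Fin (d i))) →ₗ[ℝ] EuclideanSpace ℝ (Fin n))
        (L : Submodule ℝ (∀ i, EuclideanSpace ℝ (Fin (d i)))),
        C = π '' ({x | ∀ i, x i ∈ Kt i} ∩ (L : Set (∀ i, EuclideanSpace ℝ (Fin (d i)))))) :
    ∃ (m' : ℕ), 0 < m' ∧ ∃ (d' : Fin m' → ℕ)
      (K : ∀ i : Fin m', Set (EuclideanSpace ℝ (Fin (d' i)))),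
      (∀ i, IsClosedConvexCone (K i)) ∧
      (∀ i, FaceChainBound (K i) (k + 1)) ∧
      ∃ (π' : (∀ i, EuclideanSpace ℝ (Fin (d' i))) →ₗ[ℝ] EuclideanSpace ℝ (Fin n))
        (L' : Submodule ℝ (∀ i, EuclideanSpace ℝ (Fin (d' i)))),
        C = π' '' ({x | ∀ i, x i ∈ K i} ∩ (L' : Set (∀ i, EuclideanSpace ℝ (Fin (d' i))))) ∧
        ((L' : Set (∀ i, EuclideanSpace ℝ (Fin (d' i)))) ∩
          intrinsicInterior ℝ {x | ∀ i, x i ∈ K i}).Nonempty :=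
  statement_7_general hm d C Kt hKt hKtl hlift
end

section
/- For every positive integer k, the maximum length of a chain of nonempty faces of the cone S₊^k of k×k real symmetric positive semidefinite matrices equals k + 1; that is, ℓ(S₊^k) = k + 1. -/
/-- `IsFaceChain K l F` says `F` is a chain `F 0 ⊊ F 1 ⊊ ⋯` of `l` nonempty faces of `K`. -/
def IsFaceChain {E : Type*} [AddCommGroup E] [Module ℝ E] (K : Set E) (l : ℕ)
    (F : Fin l → Set E) : Prop :=
  (∀ i, IsFace K (F i) ∧ (F i).Nonempty) ∧ ∀ i j : Fin l, i < j → F i ⊂ F j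

open Matrix LinearMap

section Faces

variable {E : Type*} [AddCommGroup E] [Module ℝ E] {K F : Set E}

theorem IsFace.mem_of_sub_smul_mem (hF : IsFace K F) (hK : ∀ c : ℝ, 0 ≤ c → ∀ x ∈ K, c • x ∈ K)
    {x y : E} (hx : x ∈ F) (hy : y ∈ K) {α : ℝ} (hα₀ : 0 < α) (hα₁ : α < 1)
    (hxy : x - α • y ∈ K) : y ∈ F := by
  have hz : (1 - α)⁻¹ • (x - α • y) ∈ K := hK _ (inv_nonneg.2 (by linarith)) _ hxy
  refine (hF.2.2 hy hz hα₀ hα₁ ?_).1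
  rwa [smul_smul, mul_inv_cancel₀ (by linarith), one_smul, add_sub_cancel]

theorem isFace_setOf_forall_eq_zero {ι : Type*} (hK : Convex ℝ K) (φ : ι → E →ₗ[ℝ] ℝ)
    (hφ : ∀ i, ∀ x ∈ K, 0 ≤ φ i x) (s : Set ι) :
    IsFace K {x | x ∈ K ∧ ∀ i ∈ s, φ i x = 0} := by
  refine ⟨fun x hx => hx.1, ?_, ?_⟩
  · intro x hx y hy a b ha hb hab
    refine ⟨hK hx.1 hy.1 ha hb hab, fun i hi => ?_⟩
    simp [hx.2 i hi, hy.2 i hi]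
  · intro x hx y hy α hα₀ hα₁ hxy
    have hsum i (hi : i ∈ s) : α * φ i x + (1 - α) * φ i y = 0 := by simpa using hxy.2 i hi
    have hzero i (hi : i ∈ s) := (add_eq_zero_iff_of_nonneg (mul_nonneg hα₀.le (hφ i x hx))
      (mul_nonneg (sub_nonneg.2 hα₁.le) (hφ i y hy))).1 (hsum i hi)
    exact ⟨⟨hx, fun i hi => ((mul_eq_zero.1 (hzero i hi).1).resolve_left hα₀.ne')⟩,
      ⟨hy, fun i hi => ((mul_eq_zero.1 (hzero i hi).2).resolve_left (sub_ne_zero.2 hα₁.ne'))⟩⟩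

end Faces

theorem Submodule.length_le_finrank_add_one {𝕜 V : Type*} [DivisionRing 𝕜] [AddCommGroup V]
    [Module 𝕜 V] [FiniteDimensional 𝕜 V] {l : ℕ} {W : Fin l → Submodule 𝕜 V}
    (hW : StrictAnti W) : l ≤ Module.finrank 𝕜 V + 1 := by
  let r : Fin l → Fin (Module.finrank 𝕜 V + 1) :=
    fun i => ⟨Module.finrank 𝕜 (W i), Nat.lt_succ_of_le (Submodule.finrank_le _)⟩
  have hr : StrictAnti r := fun _ _ hij =>
    Fin.mk_lt_mk.2 (Submodule.finrank_lt_finrank_of_lt (hW hij))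
  simpa using Fintype.card_le_of_injective r hr.injective

theorem LinearMap.exists_comp_eq_of_ker_le {𝕜 V V₂ V₃ : Type*} [DivisionRing 𝕜]
    [AddCommGroup V] [Module 𝕜 V] [AddCommGroup V₂] [Module 𝕜 V₂] [AddCommGroup V₃] [Module 𝕜 V₃]
    (f : V →ₗ[𝕜] V₂) (g : V →ₗ[𝕜] V₃) (h : ker f ≤ ker g) : ∃ M : V₂ →ₗ[𝕜] V₃, M ∘ₗ f = g := by
  obtain ⟨L, hL⟩ := ((ker f).liftQ f le_rfl).exists_leftInverse_of_injective
    (Submodule.ker_liftQ_eq_bot _ _ _ le_rfl)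
  refine ⟨(ker f).liftQ g h ∘ₗ L, LinearMap.ext fun x => ?_⟩
  have hLx : L (f x) = (ker f).mkQ x := LinearMap.congr_fun hL ((ker f).mkQ x)
  simp [hLx]

theorem Matrix.mulVec_dotProduct_mulVec_self_le {m n : Type*} [Fintype m] [Fintype n]
    (N : Matrix m n ℝ) (v : n → ℝ) :
    N *ᵥ v ⬝ᵥ N *ᵥ v ≤ (∑ i, ∑ j, N i j ^ 2) * (v ⬝ᵥ v) := by
  have hv : v ⬝ᵥ v = ∑ j, v j ^ 2 := by simp [dotProduct, sq]
  rw [hv, Finset.sum_mul]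
  simp only [dotProduct, mulVec, ← sq]
  gcongr with i
  exact Finset.sum_mul_sq_le_sq_mul_sq _ _ _

theorem Matrix.convex_setOf_posSemidef {n : Type*} :
    Convex ℝ {A : Matrix n n ℝ | A.PosSemidef} :=
  fun _ hA _ hB _ _ ha hb _ => (hA.smul ha).add (hB.smul hb)

section PosSemidef

variable {n : Type*} [Fintype n]

open scoped MatrixOrder in
theorem Matrix.PosSemidef.exists_eq_conjTranspose_mul_self {A : Matrix n n ℝ}
    (hA : A.PosSemidef) : ∃ S : Matrix n n ℝ, A = Sᴴ * S := by
  classical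
  exact CStarAlgebra.nonneg_iff_eq_star_mul_self.mp hA.nonneg

theorem Matrix.PosSemidef.ker_add {A B : Matrix n n ℝ} (hA : A.PosSemidef) (hB : B.PosSemidef) :
    ker (A + B).mulVecLin = ker A.mulVecLin ⊓ ker B.mulVecLin := by
  ext x
  simp only [Submodule.mem_inf, mem_ker, mulVecLin_apply]
  rw [← (hA.add hB).dotProduct_mulVec_zero_iff, ← hA.dotProduct_mulVec_zero_iff,
    ← hB.dotProduct_mulVec_zero_iff, add_mulVec, dotProduct_add]
  exact add_eq_zero_iff_of_nonneg (hA.dotProduct_mulVec_nonneg x) (hB.dotProduct_mulVec_nonneg x)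

theorem Matrix.ker_mulVecLin_smul (A : Matrix n n ℝ) {c : ℝ} (hc : c ≠ 0) :
    ker (c • A).mulVecLin = ker A.mulVecLin := by
  ext x
  simp [hc]

theorem Matrix.PosSemidef.exists_dotProduct_mulVec_le_of_ker_le {A B : Matrix n n ℝ}
    (hA : A.PosSemidef) (hB : B.PosSemidef) (hker : ker A.mulVecLin ≤ ker B.mulVecLin) :
    ∃ c : ℝ, 0 ≤ c ∧ ∀ x, x ⬝ᵥ B *ᵥ x ≤ c * (x ⬝ᵥ A *ᵥ x) := by
  classical
  obtain ⟨S, rfl⟩ := hA.exists_eq_conjTranspose_mul_self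
  obtain ⟨T, rfl⟩ := hB.exists_eq_conjTranspose_mul_self
  rw [ker_mulVecLin_conjTranspose_mul_self, ker_mulVecLin_conjTranspose_mul_self] at hker
  obtain ⟨M, hM⟩ := exists_comp_eq_of_ker_le _ _ hker
  refine ⟨∑ i, ∑ j, toMatrix' M i j ^ 2, by positivity, fun x => ?_⟩
  have hquad (R : Matrix n n ℝ) : x ⬝ᵥ (Rᴴ * R) *ᵥ x = R *ᵥ x ⬝ᵥ R *ᵥ x := by
    rw [← mulVec_mulVec, dotProduct_mulVec, conjTranspose_eq_transpose_of_trivial,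
      vecMul_transpose]
  have hTx : T *ᵥ x = toMatrix' M *ᵥ (S *ᵥ x) := by
    rw [toMatrix'_mulVec, ← mulVecLin_apply, ← hM, LinearMap.comp_apply, mulVecLin_apply]
  rw [hquad, hquad, hTx]
  exact mulVec_dotProduct_mulVec_self_le _ _

theorem IsFace.mem_of_ker_le {F : Set (Matrix n n ℝ)} (hF : IsFace {A | A.PosSemidef} F)
    {A B : Matrix n n ℝ} (hAF : A ∈ F) (hB : B.PosSemidef)
    (hker : ker A.mulVecLin ≤ ker B.mulVecLin) : B ∈ F := by
  have hA : A.PosSemidef := hF.1 hAF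
  obtain ⟨c, hc, hBA⟩ := hA.exists_dotProduct_mulVec_le_of_ker_le hB hker
  have hα : (c + 2)⁻¹ * c ≤ 1 := by
    rw [inv_mul_le_iff₀ (by positivity)]
    linarith
  refine hF.mem_of_sub_smul_mem (fun _ ha _ hA => hA.smul ha) hAF hB (α := (c + 2)⁻¹)
    (by positivity) (inv_lt_one_of_one_lt₀ (by linarith)) ?_
  refine PosSemidef.of_dotProduct_mulVec_nonneg (hA.1.sub (hB.1.smul (IsSelfAdjoint.all _)))
    fun x => ?_
  have hAx := hA.dotProduct_mulVec_nonneg x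
  simp only [star_trivial, sub_mulVec, smul_mulVec, dotProduct_sub, dotProduct_smul,
    smul_eq_mul, sub_nonneg] at hAx ⊢
  calc (c + 2)⁻¹ * (x ⬝ᵥ B *ᵥ x) ≤ (c + 2)⁻¹ * (c * (x ⬝ᵥ A *ᵥ x)) := by
        gcongr
        exact hBA x
    _ ≤ x ⬝ᵥ A *ᵥ x := by
        rw [← mul_assoc]
        exact mul_le_of_le_one_left hAx hα

theorem IsFace.exists_ker_le {F : Set (Matrix n n ℝ)} (hF : IsFace {A | A.PosSemidef} F)
    (hne : F.Nonempty) : ∃ A ∈ F, ∀ B ∈ F, ker A.mulVecLin ≤ ker B.mulVecLin := by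
  obtain ⟨_, ⟨A, hAF, rfl⟩, hmin⟩ :=
    wellFounded_lt.has_min ((fun A : Matrix n n ℝ => ker A.mulVecLin) '' F) (hne.image _)
  refine ⟨A, hAF, fun B hBF => ?_⟩
  have hhalf : (1 / 2 : ℝ) ≠ 0 := by norm_num
  have hCF : (1 / 2 : ℝ) • A + (1 / 2 : ℝ) • B ∈ F :=
    hF.2.1 hAF hBF (by norm_num) (by norm_num) (by norm_num)
  have hC : ker ((1 / 2 : ℝ) • A + (1 / 2 : ℝ) • B).mulVecLin =
      ker A.mulVecLin ⊓ ker B.mulVecLin := by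
    rw [PosSemidef.ker_add ((hF.1 hAF).smul (by norm_num)) ((hF.1 hBF).smul (by norm_num)),
      ker_mulVecLin_smul _ hhalf, ker_mulVecLin_smul _ hhalf]
  have hCA : ker A.mulVecLin ⊓ ker B.mulVecLin = ker A.mulVecLin :=
    eq_of_le_of_not_lt inf_le_left (hC ▸ hmin _ ⟨_, hCF, rfl⟩)
  exact hCA ▸ inf_le_right

theorem IsFaceChain.length_le_card_add_one {l : ℕ} {F : Fin l → Set (Matrix n n ℝ)}
    (h : IsFaceChain {A | A.PosSemidef} l F) : l ≤ Fintype.card n + 1 := by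
  choose A hAF hAmin using fun i => (h.1 i).1.exists_ker_le (h.1 i).2
  have hanti : StrictAnti fun i => ker (A i).mulVecLin := by
    intro i j hij
    have hFij := h.2 i j hij
    refine lt_of_le_of_ne (hAmin j _ (hFij.1 (hAF i))) fun heq => hFij.2 fun B hB => ?_
    exact (h.1 i).1.mem_of_ker_le (hAF i) ((h.1 j).1.1 hB) (heq.symm.le.trans (hAmin j B hB))
  simpa using Submodule.length_le_finrank_add_one hanti

end PosSemidef

section DiagonalFaces

variable {n : Type*}

def diagVanishingFace (s : Set n) : Set (Matrix n n ℝ) :=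
  {A | A.PosSemidef ∧ ∀ p ∈ s, A p p = 0}

theorem isFace_diagVanishingFace (s : Set n) :
    IsFace {A : Matrix n n ℝ | A.PosSemidef} (diagVanishingFace s) :=
  isFace_setOf_forall_eq_zero convex_setOf_posSemidef (fun p => entryLinearMap ℝ ℝ p p)
    (fun _ _ hA => hA.diag_nonneg) s

theorem zero_mem_diagVanishingFace (s : Set n) : (0 : Matrix n n ℝ) ∈ diagVanishingFace s :=
  ⟨PosSemidef.zero, fun _ _ => rfl⟩

theorem diagVanishingFace_strictAnti [DecidableEq n] :
    StrictAnti (diagVanishingFace : Set n → Set (Matrix n n ℝ)) := by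
  intro s t h
  refine ⟨fun A hA => ⟨hA.1, fun p hp => hA.2 p (h.1 hp)⟩, fun hts => ?_⟩
  obtain ⟨p, hpt, hps⟩ := Set.exists_of_ssubset h
  have hD : diagonal (Pi.single p 1) ∈ (diagVanishingFace s : Set (Matrix n n ℝ)) := by
    refine ⟨PosSemidef.diagonal (Pi.single_nonneg.2 zero_le_one), fun q hq => ?_⟩
    rw [diagonal_apply_eq, Pi.single_eq_of_ne (ne_of_mem_of_not_mem hq hps)]
  simpa using (hts hD).2 p hpt

theorem exists_isFaceChain_posSemidef (k : ℕ) :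
    ∃ F : Fin (k + 1) → Set (Matrix (Fin k) (Fin k) ℝ),
      IsFaceChain {A : Matrix (Fin k) (Fin k) ℝ | A.PosSemidef} (k + 1) F := by
  refine ⟨fun i => diagVanishingFace {p : Fin k | (i : ℕ) ≤ p},
    fun i => ⟨isFace_diagVanishingFace _, ⟨0, zero_mem_diagVanishingFace _⟩⟩,
    fun i j hij => diagVanishingFace_strictAnti ?_⟩
  have hik : (i : ℕ) < k := by omega
  have hji : {p : Fin k | (j : ℕ) ≤ p} ⊆ {p : Fin k | (i : ℕ) ≤ p} :=
    fun _ hp => (Fin.val_fin_le.2 hij.le).trans hp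
  exact (Set.ssubset_iff_of_subset hji).2
    ⟨⟨i, hik⟩, le_refl (i : ℕ), not_le.2 (Fin.val_fin_lt.2 hij)⟩

end DiagonalFaces

theorem statement_12_general (k : ℕ) :
    (∀ (l : ℕ) (F : Fin l → Set (Matrix (Fin k) (Fin k) ℝ)),
      IsFaceChain {A : Matrix (Fin k) (Fin k) ℝ | A.PosSemidef} l F → l ≤ k + 1) ∧
    ∃ F : Fin (k + 1) → Set (Matrix (Fin k) (Fin k) ℝ),
      IsFaceChain {A : Matrix (Fin k) (Fin k) ℝ | A.PosSemidef} (k + 1) F :=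
  ⟨fun _ _ h => by simpa using h.length_le_card_add_one, exists_isFaceChain_posSemidef k⟩

/-- For every positive integer `k`, the maximum length of a chain of
nonempty faces of `S₊ᵏ` equals `k + 1`: every chain of nonempty faces has length at most
`k + 1`, and there is a chain of nonempty faces of length `k + 1`. -/
theorem statement_12 (k : ℕ) (hk : 0 < k) :
    (∀ (l : ℕ) (F : Fin l → Set (Matrix (Fin k) (Fin k) ℝ)),
      IsFaceChain {A : Matrix (Fin k) (Fin k) ℝ | A.PosSemidef} l F → l ≤ k + 1) ∧
    ∃ F : Fin (k + 1) → Set (Matrix (Fin k) (Fin k) ℝ),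
      IsFaceChain {A : Matrix (Fin k) (Fin k) ℝ | A.PosSemidef} (k + 1) F :=
  statement_12_general k
end
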